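/- arXiv:quant-ph/0404046 — 3 statements merged into one kernel-verified Lean document; each statement's English description precedes it below -/
import Mathlib

section
/- Let y ∈ V^n be a probability vector with positive components and let λ ∈ (0,1). The following three statements are equivalent: (1) T^λ(y) = S^λ(y); (2) M^λ(y) = S^λ(y); (3) y_2 = y_n. -/
noncomputable section

/-- `eSum x l` : the sum of the `l` largest components of `x`. -/
def eSum {n : ℕ} (x : Fin n → ℝ) (l : ℕ) : ℝ :=
  sSup {r | ∃ s : Finset (Fin n), s.card = l ∧ r = ∑ i ∈ s, x i}

/-- `ESum x l` : the sum of the `l` smallest components of `x`. -/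
def ESum {n : ℕ} (x : Fin n → ℝ) (l : ℕ) : ℝ :=
  sInf {r | ∃ s : Finset (Fin n), s.card = l ∧ r = ∑ i ∈ s, x i}

/-- Majorization `x ≺ y` (for vectors with equal total sum):
`e_l(x) ≤ e_l(y)` for all `1 ≤ l ≤ n`. -/
def Maj {n : ℕ} (x y : Fin n → ℝ) : Prop :=
  (∑ i, x i) = (∑ i, y i) ∧ ∀ l : ℕ, 1 ≤ l → l ≤ n → eSum x l ≤ eSum y l

/-- Strict majorization `x ◁ y`: equal total sums and `e_l(x) < e_l(y)` for all
`1 ≤ l ≤ n - 1`. -/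
def SMaj {n : ℕ} (x y : Fin n → ℝ) : Prop :=
  (∑ i, x i) = (∑ i, y i) ∧ ∀ l : ℕ, 1 ≤ l → l + 1 ≤ n → eSum x l < eSum y l

/-- Super-majorization `x ≺ʷ y` : `E_l(x) ≥ E_l(y)` for all `1 ≤ l ≤ n`. -/
def SupMaj {n : ℕ} (x y : Fin n → ℝ) : Prop :=
  ∀ l : ℕ, 1 ≤ l → l ≤ n → ESum y l ≤ ESum x l

/-- Strict super-majorization `x ◁ʷ y` : `E_l(x) > E_l(y)` for all `1 ≤ l ≤ n`. -/
def SSupMaj {n : ℕ} (x y : Fin n → ℝ) : Prop :=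
  ∀ l : ℕ, 1 ≤ l → l ≤ n → ESum y l < ESum x l

/-- Tensor product of two vectors: the vector of all pairwise products. -/
def tensor {m k : ℕ} (x : Fin m → ℝ) (c : Fin k → ℝ) : Fin (m * k) → ℝ :=
  fun i => x (finProdFinEquiv.symm i).1 * c (finProdFinEquiv.symm i).2

/-- `k`-fold tensor power of a vector. -/
def tpow {n : ℕ} (x : Fin n → ℝ) (k : ℕ) : Fin (n ^ k) → ℝ :=
  fun i => ∏ j : Fin k, x (finFunctionFinEquiv.symm i j)

/-- `V^n` : probability vectors with components in non-increasing order. -/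
def Vn (n : ℕ) : Set (Fin n → ℝ) :=
  {x | (∀ i, 0 ≤ x i) ∧ (∑ i, x i) = 1 ∧ Antitone x}

/-- `S(y)` : members of `V^n` majorized by `y`. -/
def Sset {n : ℕ} (y : Fin n → ℝ) : Set (Fin n → ℝ) :=
  {x ∈ Vn n | Maj x y}

/-- `T(y,c)` : members of `V^n` with `x ⊗ c ≺ y ⊗ c`. -/
def Tcat {n k : ℕ} (y : Fin n → ℝ) (c : Fin k → ℝ) : Set (Fin n → ℝ) :=
  {x ∈ Vn n | Maj (tensor x c) (tensor y c)}

/-- Local uniformity `l_u(c)` : the minimum of the consecutive ratios `c_{i+1}/c_i`. -/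
def lu {k : ℕ} (c : Fin k → ℝ) : ℝ :=
  sInf {r | ∃ i : ℕ, ∃ h : i + 1 < k, r = c ⟨i + 1, h⟩ / c ⟨i, Nat.lt_of_succ_lt h⟩}

/-- Global uniformity `g_u(c) = c_k / c_1` (smallest over largest component of a
non-increasingly ordered vector). -/
def gu {k : ℕ} (c : Fin k → ℝ) : ℝ :=
  if h : 0 < k then c ⟨k - 1, Nat.sub_lt h Nat.one_pos⟩ / c ⟨0, h⟩ else 1

/-- Largest component. -/
def maxc {n : ℕ} (x : Fin n → ℝ) : ℝ := sSup (Set.range x)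

/-- Smallest component. -/
def minc {n : ℕ} (x : Fin n → ℝ) : ℝ := sInf (Set.range x)

/-- `c'` is a (contiguous) segment of `c`. -/
def IsSegment {j k : ℕ} (c' : Fin j → ℝ) (c : Fin k → ℝ) : Prop :=
  ∃ (i : ℕ) (_h : i + j ≤ k), ∀ t : Fin j, c' t = c ⟨i + t, by have := t.isLt; omega⟩

/-- The first `d` components of a vector. -/
def take {n : ℕ} (x : Fin n → ℝ) (d : ℕ) (h : d ≤ n) : Fin d → ℝ :=
  fun i => x ⟨i, Nat.lt_of_lt_of_le i.isLt h⟩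

/-- The components of a vector after the first `d` ones. -/
def drop {n : ℕ} (x : Fin n → ℝ) (d : ℕ) : Fin (n - d) → ℝ :=
  fun i => x ⟨d + i, by have := i.isLt; omega⟩

/-- The segment `(c_i, …, c_j)` of `c` (`0`-based indices). -/
def seg {k : ℕ} (c : Fin k → ℝ) (i j : ℕ) (hij : i ≤ j) (hj : j < k) :
    Fin (j - i + 1) → ℝ :=
  fun t => c ⟨i + t, by have := t.isLt; omega⟩

/-- `(c_i, …, c_j)` is a block of the decomposition `[c]_α` of the (positive,
non-increasingly ordered) vector `c` according to `α`: ratios within the block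
exceed `α`, and the ratios at the two boundaries of the block are `≤ α`
(or the block touches an end of `c`). -/
def IsBlock {k : ℕ} (α : ℝ) (c : Fin k → ℝ) (i j : ℕ) : Prop :=
  ∃ (hij : i ≤ j) (hj : j < k),
    (i = 0 ∨ c ⟨i, by omega⟩ / c ⟨i - 1, by omega⟩ ≤ α) ∧
    (j = k - 1 ∨ ∃ hj1 : j + 1 < k, c ⟨j + 1, hj1⟩ / c ⟨j, hj⟩ ≤ α) ∧
    (∀ (t : ℕ) (ht1 : i ≤ t) (ht2 : t < j), α < c ⟨t + 1, by omega⟩ / c ⟨t, by omega⟩)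

/-- `T_k(y)` : states transformable to `y` with a `k`-dimensional catalyst. -/
def Tk {n : ℕ} (k : ℕ) (y : Fin n → ℝ) : Set (Fin n → ℝ) :=
  {x ∈ Vn n | ∃ c : Fin k → ℝ, (∀ i, 0 < c i) ∧ (∑ i, c i) = 1 ∧ Antitone c ∧
    Maj (tensor x c) (tensor y c)}

/-- `M_k(y)` : states `x` with `x^{⊗k} ≺ y^{⊗k}`. -/
def Mk {n : ℕ} (k : ℕ) (y : Fin n → ℝ) : Set (Fin n → ℝ) :=
  {x ∈ Vn n | Maj (tpow x k) (tpow y k)}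

/-- `T(y)` : states transformable to `y` with some catalyst. -/
def Tinf {n : ℕ} (y : Fin n → ℝ) : Set (Fin n → ℝ) :=
  {x ∈ Vn n | ∃ (k : ℕ) (c : Fin k → ℝ), 0 < k ∧ (∀ i, 0 < c i) ∧ (∑ i, c i) = 1 ∧
    Antitone c ∧ Maj (tensor x c) (tensor y c)}

/-- `M(y)` : states `x` with `x^{⊗k} ≺ y^{⊗k}` for some `k ≥ 1`. -/
def Minf {n : ℕ} (y : Fin n → ℝ) : Set (Fin n → ℝ) :=
  {x ∈ Vn n | ∃ k : ℕ, 1 ≤ k ∧ Maj (tpow x k) (tpow y k)}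

/-- `S^λ(y)` : states `x` with `x ≺ʷ λ y`. -/
def Slam {n : ℕ} (lam : ℝ) (y : Fin n → ℝ) : Set (Fin n → ℝ) :=
  {x ∈ Vn n | SupMaj x (fun i => lam * y i)}

/-- `T^λ(y,c)` : states `x` with `x ⊗ c ≺ʷ λ (y ⊗ c)`. -/
def Tlamc {n k : ℕ} (lam : ℝ) (y : Fin n → ℝ) (c : Fin k → ℝ) : Set (Fin n → ℝ) :=
  {x ∈ Vn n | SupMaj (tensor x c) (fun i => lam * tensor y c i)}

/-- `T_k^λ(y)`. -/
def Tklam {n : ℕ} (k : ℕ) (lam : ℝ) (y : Fin n → ℝ) : Set (Fin n → ℝ) :=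
  {x ∈ Vn n | ∃ c : Fin k → ℝ, (∀ i, 0 < c i) ∧ (∑ i, c i) = 1 ∧ Antitone c ∧
    SupMaj (tensor x c) (fun i => lam * tensor y c i)}

/-- `M_k^λ(y)`. -/
def Mklam {n : ℕ} (k : ℕ) (lam : ℝ) (y : Fin n → ℝ) : Set (Fin n → ℝ) :=
  {x ∈ Vn n | SupMaj (tpow x k) (fun i => lam ^ k * tpow y k i)}

/-- `T^λ(y)`. -/
def Tlaminf {n : ℕ} (lam : ℝ) (y : Fin n → ℝ) : Set (Fin n → ℝ) :=
  {x ∈ Vn n | ∃ (k : ℕ) (c : Fin k → ℝ), 0 < k ∧ (∀ i, 0 < c i) ∧ (∑ i, c i) = 1 ∧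
    Antitone c ∧ SupMaj (tensor x c) (fun i => lam * tensor y c i)}

/-- `M^λ(y)`. -/
def Mlaminf {n : ℕ} (lam : ℝ) (y : Fin n → ℝ) : Set (Fin n → ℝ) :=
  {x ∈ Vn n | ∃ k : ℕ, 1 ≤ k ∧ SupMaj (tpow x k) (fun i => lam ^ k * tpow y k i)}

/-- `K_d(y)` : concatenations `x = x' ⊕ x''` with `x' ◁ y'` and `x'' ◁ y''`,
where `y'` is the first-`d` part of `y` and `y''` the rest. -/
def Kd {n : ℕ} (y : Fin n → ℝ) (d : ℕ) (h : d ≤ n) : Set (Fin n → ℝ) :=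
  {x ∈ Vn n | SMaj (take x d h) (take y d h) ∧ SMaj (drop x d) (drop y d)}

/-- `y(d)` : first `d` components equal to `e_d(y)/d`, the last `n-d` equal to
`(1 - e_d(y))/(n-d)`. -/
def yvec {n : ℕ} (y : Fin n → ℝ) (d : ℕ) : Fin n → ℝ :=
  fun i => if (i : ℕ) < d then eSum y d / d else (1 - eSum y d) / (n - d)

/-- `K_d^λ(y)` : states `x ∈ S^λ(y)` with `E_l(x) = λ E_l(y)` iff `l = n - d`. -/
def Kdlam {n : ℕ} (lam : ℝ) (y : Fin n → ℝ) (d : ℕ) : Set (Fin n → ℝ) :=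
  {x ∈ Vn n | SupMaj x (fun i => lam * y i) ∧
    ∀ l : ℕ, 1 ≤ l → l ≤ n → (ESum x l = lam * ESum y l ↔ l = n - d)}

namespace Stmt6Aux
open Finset

variable {N : ℕ}

/-- The defining set of `ESum` as a finset image. -/
lemma esumSet_eq (x : Fin N → ℝ) (l : ℕ) :
    {r | ∃ s : Finset (Fin N), s.card = l ∧ r = ∑ i ∈ s, x i}
      = ↑(((Finset.univ : Finset (Fin N)).powersetCard l).image
          (fun s => ∑ i ∈ s, x i)) := by
  ext r
  simp only [Set.mem_setOf_eq, Finset.coe_image, Set.mem_image, Finset.mem_coe,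
    Finset.mem_powersetCard]
  constructor
  · rintro ⟨s, hs, rfl⟩; exact ⟨s, ⟨Finset.subset_univ s, hs⟩, rfl⟩
  · rintro ⟨s, ⟨-, hs⟩, rfl⟩; exact ⟨s, hs, rfl⟩

lemma esumSet_finite (x : Fin N → ℝ) (l : ℕ) :
    Set.Finite {r | ∃ s : Finset (Fin N), s.card = l ∧ r = ∑ i ∈ s, x i} := by
  rw [esumSet_eq]; exact Finset.finite_toSet _

lemma esumSet_nonempty (x : Fin N → ℝ) {l : ℕ} (hl : l ≤ N) :
    Set.Nonempty {r | ∃ s : Finset (Fin N), s.card = l ∧ r = ∑ i ∈ s, x i} := by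
  obtain ⟨s, -, hs⟩ := Finset.exists_subset_card_eq (s := (Finset.univ : Finset (Fin N))) (n := l)
    (by simpa using hl)
  exact ⟨∑ i ∈ s, x i, s, hs, rfl⟩

lemma ESum_le (x : Fin N → ℝ) {l : ℕ} (s : Finset (Fin N)) (hs : s.card = l) :
    ESum x l ≤ ∑ i ∈ s, x i := by
  apply csInf_le ((esumSet_finite x l).bddBelow)
  exact ⟨s, hs, rfl⟩

lemma le_ESum (x : Fin N → ℝ) {l : ℕ} (hl : l ≤ N) {r : ℝ}
    (h : ∀ s : Finset (Fin N), s.card = l → r ≤ ∑ i ∈ s, x i) : r ≤ ESum x l := by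
  apply le_csInf (esumSet_nonempty x hl)
  rintro _ ⟨s, hs, rfl⟩; exact h s hs

lemma ESum_attained (x : Fin N → ℝ) {l : ℕ} (hl : l ≤ N) :
    ∃ s : Finset (Fin N), s.card = l ∧ ESum x l = ∑ i ∈ s, x i := by
  have := (esumSet_nonempty x hl).csInf_mem (esumSet_finite x l)
  exact this

/-- `W v θ = ∑ min (v i) θ`. -/
def W (v : Fin N → ℝ) (θ : ℝ) : ℝ := ∑ i, min (v i) θ

lemma W_le_sum_add (v : Fin N → ℝ) (θ : ℝ) {l : ℕ} (s : Finset (Fin N))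
    (hs : s.card = l) : W v θ ≤ (∑ i ∈ s, v i) + (N - l : ℕ) * θ := by
  have h1 : W v θ = (∑ i ∈ s, min (v i) θ) + ∑ i ∈ sᶜ, min (v i) θ :=
    (Finset.sum_add_sum_compl s _).symm
  have h2 : (∑ i ∈ s, min (v i) θ) ≤ ∑ i ∈ s, v i :=
    Finset.sum_le_sum fun i _ => min_le_left _ _
  have h3 : (∑ i ∈ sᶜ, min (v i) θ) ≤ ∑ i ∈ sᶜ, θ :=
    Finset.sum_le_sum fun i _ => min_le_right _ _
  have h4 : (∑ i ∈ sᶜ, (θ:ℝ)) = (N - l : ℕ) * θ := by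
    rw [Finset.sum_const, Finset.card_compl, hs, Fintype.card_fin, nsmul_eq_mul]
  linarith

/-- Weak duality: `W v θ - (N-l) θ ≤ E_l(v)`. -/
lemma W_le_ESum_add (v : Fin N → ℝ) (θ : ℝ) {l : ℕ} (hl : l ≤ N) :
    W v θ ≤ ESum v l + (N - l : ℕ) * θ := by
  have := le_ESum v hl (r := W v θ - (N - l : ℕ) * θ) (fun s hs => by
    have := W_le_sum_add v θ s hs; linarith)
  linarith

/-- Strong duality: `E_l(v)` is attained by some `θ`. -/
lemma ESum_le_W_sub (v : Fin N → ℝ) {l : ℕ} (hl : l ≤ N) :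
    ∃ θ : ℝ, ESum v l ≤ W v θ - (N - l : ℕ) * θ := by
  obtain ⟨s, hcard, hsum⟩ := ESum_attained v hl
  rcases eq_or_lt_of_le hl with heq | hlt
  · -- l = N : take θ larger than all entries
    obtain ⟨θ, hθ⟩ : ∃ θ : ℝ, ∀ i, v i ≤ θ := by
      rcases isEmpty_or_nonempty (Fin N) with h | h
      · exact ⟨0, fun i => (h.false i).elim⟩
      · obtain ⟨θ, hθ⟩ := Finset.exists_le (Finset.univ.image v)
        exact ⟨θ, fun i => hθ _ (Finset.mem_image_of_mem v (Finset.mem_univ i))⟩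
    refine ⟨θ, ?_⟩
    have hNl : (N - l : ℕ) = 0 := by omega
    have hW : W v θ = ∑ i, v i := Finset.sum_congr rfl fun i _ => min_eq_left (hθ i)
    have hs : s = Finset.univ := Finset.eq_univ_of_card s (by rw [hcard, ← heq, Fintype.card_fin])
    rw [hNl, hW, hsum, hs]; simp
  · -- l < N : take θ = min of v on the complement
    have hne : sᶜ.Nonempty := by
      have hcc : sᶜ.card = N - l := by
        rw [Finset.card_compl, hcard, Fintype.card_fin]
      rw [← Finset.card_pos, hcc]; omega
    obtain ⟨i₀, hi₀mem, hi₀min⟩ := Finset.exists_min_image sᶜ v hne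
    set θ := v i₀ with hθdef
    -- every element of s has v i ≤ θ
    have hkey : ∀ i ∈ s, v i ≤ θ := by
      intro i hi
      by_contra hgt
      push_neg at hgt
      -- swap i for i₀ gives a smaller sum, contradiction
      have hi₀s : i₀ ∉ s := by simpa using hi₀mem
      have hswap : (insert i₀ (s.erase i)).card = l := by
        rw [Finset.card_insert_of_notMem (fun hmem => hi₀s (Finset.mem_of_mem_erase hmem)),
          Finset.card_erase_of_mem hi, hcard]
        have : 1 ≤ l := hcard ▸ Finset.card_pos.mpr ⟨i, hi⟩
        omega
      have hsum2 : ∑ j ∈ insert i₀ (s.erase i), v j = θ + (∑ j ∈ s, v j) - v i := by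
        rw [Finset.sum_insert (fun hmem => hi₀s (Finset.mem_of_mem_erase hmem)),
          Finset.sum_erase_eq_sub hi]
        ring
      have := ESum_le v (insert i₀ (s.erase i)) hswap
      rw [hsum2, ← hsum] at this
      linarith
    refine ⟨θ, ?_⟩
    have hW : W v θ = (∑ i ∈ s, v i) + (N - l : ℕ) * θ := by
      rw [W, ← Finset.sum_add_sum_compl s]
      congr 1
      · exact Finset.sum_congr rfl fun i hi => min_eq_left (hkey i hi)
      · rw [Finset.sum_congr rfl fun i hi => min_eq_right (hi₀min i hi),
          Finset.sum_const, Finset.card_compl, hcard, Fintype.card_fin, nsmul_eq_mul]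
    rw [hW, hsum]; ring_nf; exact le_refl _

/-- Criterion: pointwise domination of `W` implies supermajorization. -/
lemma supMaj_of_W (v w : Fin N → ℝ) (h : ∀ θ : ℝ, W w θ ≤ W v θ) : SupMaj v w := by
  intro l hl1 hlN
  obtain ⟨θ, hθ⟩ := ESum_le_W_sub w hlN
  have h2 := W_le_ESum_add v θ hlN
  have := h θ
  linarith

/-- Converse: supermajorization implies pointwise `W` domination. -/
lemma W_le_of_supMaj (v w : Fin N → ℝ) (h : SupMaj v w) (θ : ℝ) : W w θ ≤ W v θ := by
  classical
  set s₀ := Finset.univ.filter (fun i => v i < θ) with hs₀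
  set l₀ := s₀.card with hl₀
  have hl₀N : l₀ ≤ N := by
    rw [hl₀]; simpa using Finset.card_le_card (Finset.subset_univ s₀)
  have hWv : W v θ = (∑ i ∈ s₀, v i) + (N - l₀ : ℕ) * θ := by
    rw [W, ← Finset.sum_add_sum_compl s₀]
    congr 1
    · refine Finset.sum_congr rfl fun i hi => min_eq_left ?_
      have : v i < θ := (Finset.mem_filter.mp hi).2
      linarith
    · have : ∀ i ∈ s₀ᶜ, min (v i) θ = θ := by
        intro i hi
        have : ¬ (v i < θ) := by simpa [hs₀] using (Finset.mem_compl.mp hi)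
        exact min_eq_right (by linarith)
      rw [Finset.sum_congr rfl this, Finset.sum_const, Finset.card_compl,
        Fintype.card_fin, nsmul_eq_mul]
  rcases Nat.eq_zero_or_pos l₀ with h0 | hpos
  · -- all v i ≥ θ
    have hs₀e : s₀ = ∅ := Finset.card_eq_zero.mp h0
    have hWv2 : W v θ = (N : ℕ) * θ := by
      rw [hWv, hs₀e]; simp [h0]
    have : W w θ ≤ ∑ i : Fin N, θ := Finset.sum_le_sum fun i _ => min_le_right _ _
    rw [hWv2]
    simpa using this
  · have h1 : W w θ ≤ ESum w l₀ + (N - l₀ : ℕ) * θ := W_le_ESum_add w θ hl₀N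
    have h2 : ESum w l₀ ≤ ESum v l₀ := h l₀ hpos hl₀N
    have h3 : ESum v l₀ ≤ ∑ i ∈ s₀, v i := ESum_le v s₀ rfl
    linarith

end Stmt6Aux

namespace Stmt6Aux
open Finset

variable {n k : ℕ}

lemma min_mul_pos {c : ℝ} (hc : 0 < c) (a θ : ℝ) :
    min (a * c) θ = c * min a (θ / c) := by
  rw [mul_min_of_nonneg _ _ hc.le, mul_div_cancel₀ _ (ne_of_gt hc), mul_comm a c]

/-- `W` of a tensor product decomposes over the catalyst. -/
lemma W_tensor (x : Fin n → ℝ) (c : Fin k → ℝ) (hc : ∀ j, 0 < c j) (θ : ℝ) :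
    W (tensor x c) θ = ∑ j, c j * W x (θ / c j) := by
  have h1 : W (tensor x c) θ = ∑ p : Fin n × Fin k, min (x p.1 * c p.2) θ :=
    Equiv.sum_comp finProdFinEquiv.symm (fun p => min (x p.1 * c p.2) θ)
  rw [h1, Fintype.sum_prod_type, Finset.sum_comm]
  refine Finset.sum_congr rfl fun j _ => ?_
  simp_rw [min_mul_pos (hc j)]
  rw [← Finset.mul_sum, W]

/-- Reindexing `W (tpow v K)` over tuples. -/
lemma W_tpow (v : Fin n → ℝ) (K : ℕ) (θ : ℝ) :
    W (tpow v K) θ = ∑ f : Fin K → Fin n, min (∏ a, v (f a)) θ := by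
  rw [W, ← Equiv.sum_comp (finFunctionFinEquiv : (Fin K → Fin n) ≃ _)
    (fun i : Fin (n ^ K) => min (tpow v K i) θ)]
  refine Finset.sum_congr rfl fun f _ => ?_
  congr 1
  rw [tpow]
  refine Finset.prod_congr rfl fun j _ => ?_
  rw [Equiv.symm_apply_apply]

/-- Mixed tensor-power `W` sums. -/
def HH (x z : Fin n → ℝ) (j₁ j₂ : ℕ) (θ : ℝ) : ℝ :=
  ∑ f : Fin j₁ → Fin n, ∑ g : Fin j₂ → Fin n,
    min ((∏ a, x (f a)) * (∏ a, z (g a))) θ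

lemma HH_right_zero (x z : Fin n → ℝ) (K : ℕ) (θ : ℝ) :
    HH x z K 0 θ = W (tpow x K) θ := by
  rw [HH, W_tpow]
  refine Finset.sum_congr rfl fun f _ => ?_
  rw [Finset.sum_congr rfl (fun (g : Fin 0 → Fin n) _ => by
    rw [show (∏ a, z (g a)) = 1 from Finset.prod_of_isEmpty _, mul_one])]
  rw [Finset.sum_const]
  have : (Finset.univ : Finset (Fin 0 → Fin n)).card = 1 := by
    simp [Finset.card_univ]
  rw [this, one_smul]

lemma HH_left_zero (x z : Fin n → ℝ) (K : ℕ) (θ : ℝ) :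
    HH x z 0 K θ = W (tpow z K) θ := by
  rw [HH, W_tpow]
  have : (Finset.univ : Finset (Fin 0 → Fin n)).card = 1 := by
    simp [Finset.card_univ]
  rw [Finset.sum_congr rfl (fun (f : Fin 0 → Fin n) _ => by
    rw [Finset.sum_congr rfl (fun (g : Fin K → Fin n) _ => by
      rw [show (∏ a, x (f a)) = 1 from Finset.prod_of_isEmpty _, one_mul])])]
  rw [Finset.sum_const, this, one_smul]

lemma HH_succ_left (x z : Fin n → ℝ) (hx : ∀ i, 0 < x i) (hz : ∀ i, 0 < z i)
    (j₁ j₂ : ℕ) (θ : ℝ) :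
    HH x z (j₁ + 1) j₂ θ
      = ∑ f : Fin j₁ → Fin n, ∑ g : Fin j₂ → Fin n,
          ((∏ a, x (f a)) * (∏ a, z (g a)))
            * W x (θ / ((∏ a, x (f a)) * (∏ a, z (g a)))) := by
  rw [HH, ← Equiv.sum_comp (Fin.consEquiv (fun _ : Fin (j₁+1) => Fin n))
    (fun f : Fin (j₁ + 1) → Fin n => ∑ g : Fin j₂ → Fin n,
      min ((∏ a, x (f a)) * (∏ a, z (g a))) θ)]
  rw [Fintype.sum_prod_type, Finset.sum_comm]
  refine Finset.sum_congr rfl fun f _ => ?_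
  have hP : ∀ g : Fin j₂ → Fin n, (0:ℝ) < (∏ a, x (f a)) * (∏ a, z (g a)) :=
    fun g => mul_pos (Finset.prod_pos fun a _ => hx _) (Finset.prod_pos fun a _ => hz _)
  rw [Finset.sum_comm]
  refine Finset.sum_congr rfl fun g _ => ?_
  have hcons : ∀ i : Fin n,
      (∏ a, x ((Fin.consEquiv (fun _ : Fin (j₁+1) => Fin n)) (i, f) a))
        = x i * ∏ a, x (f a) := by
    intro i
    rw [Fin.prod_univ_succ]
    simp [Fin.consEquiv]
  calc ∑ i : Fin n,
        min ((∏ a, x ((Fin.consEquiv (fun _ : Fin (j₁+1) => Fin n)) (i, f) a))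
          * (∏ a, z (g a))) θ
      = ∑ i : Fin n, ((∏ a, x (f a)) * (∏ a, z (g a)))
          * min (x i) (θ / ((∏ a, x (f a)) * (∏ a, z (g a)))) := by
        refine Finset.sum_congr rfl fun i _ => ?_
        rw [hcons i, mul_assoc, ← min_mul_pos (hP g)]
    _ = ((∏ a, x (f a)) * (∏ a, z (g a)))
          * W x (θ / ((∏ a, x (f a)) * (∏ a, z (g a)))) := by
        rw [← Finset.mul_sum, W]

lemma HH_succ_right (x z : Fin n → ℝ) (hx : ∀ i, 0 < x i) (hz : ∀ i, 0 < z i)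
    (j₁ j₂ : ℕ) (θ : ℝ) :
    HH x z j₁ (j₂ + 1) θ
      = ∑ f : Fin j₁ → Fin n, ∑ g : Fin j₂ → Fin n,
          ((∏ a, x (f a)) * (∏ a, z (g a)))
            * W z (θ / ((∏ a, x (f a)) * (∏ a, z (g a)))) := by
  rw [HH]
  refine Finset.sum_congr rfl fun f _ => ?_
  rw [← Equiv.sum_comp (Fin.consEquiv (fun _ : Fin (j₂+1) => Fin n))
    (fun g : Fin (j₂ + 1) → Fin n =>
      min ((∏ a, x (f a)) * (∏ a, z (g a))) θ)]
  rw [Fintype.sum_prod_type, Finset.sum_comm]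
  refine Finset.sum_congr rfl fun g _ => ?_
  have hP : (0:ℝ) < (∏ a, x (f a)) * (∏ a, z (g a)) :=
    mul_pos (Finset.prod_pos fun a _ => hx _) (Finset.prod_pos fun a _ => hz _)
  have hcons : ∀ i : Fin n,
      (∏ a, z ((Fin.consEquiv (fun _ : Fin (j₂+1) => Fin n)) (i, g) a))
        = z i * ∏ a, z (g a) := by
    intro i
    rw [Fin.prod_univ_succ]
    simp [Fin.consEquiv]
  calc ∑ i : Fin n,
        min ((∏ a, x (f a))
          * (∏ a, z ((Fin.consEquiv (fun _ : Fin (j₂+1) => Fin n)) (i, g) a))) θ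
      = ∑ i : Fin n, ((∏ a, x (f a)) * (∏ a, z (g a)))
          * min (z i) (θ / ((∏ a, x (f a)) * (∏ a, z (g a)))) := by
        refine Finset.sum_congr rfl fun i _ => ?_
        rw [hcons i, ← min_mul_pos hP]
        ring_nf
    _ = _ := by rw [← Finset.mul_sum, W]

/-- Sum of products of tuples equals the power of the sum. -/
lemma sum_prod_tuple (v : Fin n → ℝ) :
    ∀ j : ℕ, ∑ f : Fin j → Fin n, ∏ a, v (f a) = (∑ i, v i) ^ j := by
  intro j
  induction j with
  | zero =>
    rw [pow_zero]
    rw [Finset.sum_congr rfl (fun (f : Fin 0 → Fin n) _ =>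
      Finset.prod_of_isEmpty _), Finset.sum_const]
    have : (Finset.univ : Finset (Fin 0 → Fin n)).card = 1 := by
      simp [Finset.card_univ]
    rw [this, one_smul]
  | succ j ih =>
    rw [← Equiv.sum_comp (Fin.consEquiv (fun _ : Fin (j+1) => Fin n))
      (fun f : Fin (j + 1) → Fin n => ∏ a, v (f a))]
    rw [Fintype.sum_prod_type]
    have : ∀ i : Fin n, ∀ f : Fin j → Fin n,
        (∏ a, v ((Fin.consEquiv (fun _ : Fin (j+1) => Fin n)) (i, f) a))
          = v i * ∏ a, v (f a) := by
      intro i f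
      rw [Fin.prod_univ_succ]
      simp [Fin.consEquiv]
    calc ∑ i : Fin n, ∑ f : Fin j → Fin n,
          (∏ a, v ((Fin.consEquiv (fun _ : Fin (j+1) => Fin n)) (i, f) a))
        = ∑ i : Fin n, ∑ f : Fin j → Fin n, v i * ∏ a, v (f a) := by
          exact Finset.sum_congr rfl fun i _ => Finset.sum_congr rfl fun f _ => this i f
      _ = ∑ i : Fin n, v i * ((∑ i, v i) ^ j) := by
          exact Finset.sum_congr rfl fun i _ => by rw [← Finset.mul_sum, ih]
      _ = (∑ i, v i) ^ (j + 1) := by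
          rw [← Finset.sum_mul, pow_succ, mul_comm ((∑ i, v i) ^ j)]

end Stmt6Aux

namespace Stmt6Aux
open Finset

variable {n : ℕ} {y : Fin n → ℝ} {lam : ℝ}

lemma tpow_smul (y : Fin n → ℝ) (lam : ℝ) (K : ℕ) :
    (fun i => lam ^ K * tpow y K i) = tpow (fun i => lam * y i) K := by
  funext i
  rw [tpow, tpow, Finset.prod_mul_distrib, Finset.prod_const]
  congr 1
  rw [Finset.card_univ, Fintype.card_fin]

lemma W_tpow_one (v : Fin n → ℝ) (θ : ℝ) : W (tpow v 1) θ = W v θ := by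
  rw [W_tpow, ← Equiv.sum_comp (Equiv.funUnique (Fin 1) (Fin n)).symm
    (fun f : Fin 1 → Fin n => min (∏ a, v (f a)) θ)]
  rw [W]
  refine Finset.sum_congr rfl fun b _ => ?_
  congr 1
  rw [Fin.prod_univ_one]
  rfl

/-- `S^λ(y) ⊆ T^λ(y)` (trivial catalyst). -/
lemma Slam_subset_Tlaminf : Slam lam y ⊆ Tlaminf lam y := by
  rintro x ⟨hxV, hsup⟩
  refine ⟨hxV, 1, (fun _ : Fin 1 => (1:ℝ)), Nat.one_pos, fun _ => one_pos, by simp,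
    (fun a b _ => le_refl _), ?_⟩
  apply supMaj_of_W
  intro θ
  have h1 : W (fun i : Fin (n * 1) => lam * tensor y (fun _ : Fin 1 => (1:ℝ)) i) θ
      = W (tensor (fun i => lam * y i) (fun _ : Fin 1 => (1:ℝ))) θ := by
    rw [W, W]
    refine Finset.sum_congr rfl fun i _ => by rw [tensor, tensor]; ring_nf
  calc W (fun i : Fin (n * 1) => lam * tensor y (fun _ : Fin 1 => (1:ℝ)) i) θ
      = W (tensor (fun i => lam * y i) (fun _ : Fin 1 => (1:ℝ))) θ := h1
    _ = ∑ j : Fin 1, 1 * W (fun i => lam * y i) (θ / 1) :=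
        W_tensor (fun i => lam * y i) (fun _ : Fin 1 => (1:ℝ)) (fun _ => one_pos) θ
    _ ≤ ∑ j : Fin 1, 1 * W x (θ / 1) := by
        refine Finset.sum_le_sum fun j _ => ?_
        have := W_le_of_supMaj x (fun i => lam * y i) hsup (θ / 1)
        linarith
    _ = W (tensor x (fun _ : Fin 1 => (1:ℝ))) θ :=
        (W_tensor x (fun _ : Fin 1 => (1:ℝ)) (fun _ => one_pos) θ).symm

/-- `S^λ(y) ⊆ M^λ(y)` (one copy). -/
lemma Slam_subset_Mlaminf : Slam lam y ⊆ Mlaminf lam y := by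
  rintro x ⟨hxV, hsup⟩
  refine ⟨hxV, 1, le_refl 1, ?_⟩
  apply supMaj_of_W
  intro θ
  rw [tpow_smul, W_tpow_one, W_tpow_one]
  exact W_le_of_supMaj x (fun i => lam * y i) hsup θ

variable (hn : 2 ≤ n)

/-- Last-component extraction from `T^λ` membership. -/
lemma T_min_bound (hl0 : 0 < lam) (hy : y ∈ Vn n) (hypos : ∀ i, 0 < y i)
    {x : Fin n → ℝ} (hx : x ∈ Tlaminf lam y) :
    lam * y ⟨n - 1, by have := hl0; omega⟩ ≤ x ⟨n - 1, by have := hl0; omega⟩ := by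
  obtain ⟨hxV, k, c, hk, hcpos, hcsum, hcanti, hsup⟩ := hx
  have hnk : 1 ≤ n * k := Nat.one_le_iff_ne_zero.mpr (by positivity)
  have h1 := hsup 1 le_rfl hnk
  set a₀ : Fin n := ⟨n - 1, by omega⟩
  set b₀ : Fin k := ⟨k - 1, by omega⟩
  set i₀ : Fin (n * k) := finProdFinEquiv (a₀, b₀)
  have hup : ESum (tensor x c) 1 ≤ x a₀ * c b₀ := by
    have := ESum_le (tensor x c) {i₀} (Finset.card_singleton _)
    rwa [Finset.sum_singleton, tensor, show finProdFinEquiv.symm i₀ = (a₀, b₀) from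
      Equiv.symm_apply_apply _ _] at this
  have hlow : lam * y a₀ * c b₀ ≤ ESum (fun i => lam * tensor y c i) 1 := by
    apply le_ESum _ hnk
    intro s hs
    obtain ⟨i, rfl⟩ := Finset.card_eq_one.mp hs
    rw [Finset.sum_singleton, tensor]
    have hy1 : y a₀ ≤ y (finProdFinEquiv.symm i).1 := by
      apply hy.2.2
      rw [Fin.le_def]
      exact Nat.le_pred_of_lt (finProdFinEquiv.symm i).1.isLt
    have hc1 : c b₀ ≤ c (finProdFinEquiv.symm i).2 := by
      apply hcanti
      rw [Fin.le_def]
      exact Nat.le_pred_of_lt (finProdFinEquiv.symm i).2.isLt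
    have := mul_le_mul hy1 hc1 (le_of_lt (hcpos b₀)) (le_of_lt (hypos _))
    nlinarith [this, hl0]
  have hc0 := hcpos b₀
  have : lam * y a₀ * c b₀ ≤ x a₀ * c b₀ := le_trans hlow (le_trans h1 hup)
  exact le_of_mul_le_mul_right this hc0

/-- Last-component extraction from `M^λ` membership. -/
lemma M_min_bound (hl0 : 0 < lam) (hy : y ∈ Vn n) (hypos : ∀ i, 0 < y i)
    {x : Fin n → ℝ} (hx : x ∈ Mlaminf lam y) :
    lam * y ⟨n - 1, by have := hl0; omega⟩ ≤ x ⟨n - 1, by have := hl0; omega⟩ := by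
  obtain ⟨hxV, k, hk, hsup⟩ := hx
  have hnk : 1 ≤ n ^ k := Nat.one_le_pow _ _ (by omega)
  have h1 := hsup 1 le_rfl hnk
  set a₀ : Fin n := ⟨n - 1, by omega⟩
  set i₀ : Fin (n ^ k) := finFunctionFinEquiv (fun _ => a₀)
  have hxa0 : 0 ≤ x a₀ := hxV.1 _
  have hup : ESum (tpow x k) 1 ≤ x a₀ ^ k := by
    have := ESum_le (tpow x k) {i₀} (Finset.card_singleton _)
    rw [Finset.sum_singleton, tpow] at this
    calc ESum (tpow x k) 1 ≤ ∏ j : Fin k, x (finFunctionFinEquiv.symm i₀ j) := this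
      _ = x a₀ ^ k := by
          rw [show (finFunctionFinEquiv.symm i₀) = (fun _ : Fin k => a₀) from
            Equiv.symm_apply_apply _ _, Finset.prod_const, Finset.card_univ,
            Fintype.card_fin]
  have hlow : (lam * y a₀) ^ k ≤ ESum (fun i => lam ^ k * tpow y k i) 1 := by
    apply le_ESum _ hnk
    intro s hs
    obtain ⟨i, rfl⟩ := Finset.card_eq_one.mp hs
    rw [Finset.sum_singleton, tpow, mul_pow]
    have : y a₀ ^ k ≤ ∏ j : Fin k, y (finFunctionFinEquiv.symm i j) := by
      rw [show (y a₀ ^ k) = ∏ _j : Fin k, y a₀ by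
        rw [Finset.prod_const, Finset.card_univ, Fintype.card_fin]]
      refine Finset.prod_le_prod (fun j _ => le_of_lt (hypos a₀)) (fun j _ => ?_)
      apply hy.2.2
      rw [Fin.le_def]
      exact Nat.le_pred_of_lt (finFunctionFinEquiv.symm i j).isLt
    have hlk : (0:ℝ) ≤ lam ^ k := by positivity
    exact mul_le_mul_of_nonneg_left this hlk
  have hpow : (lam * y a₀) ^ k ≤ x a₀ ^ k := le_trans hlow (le_trans h1 hup)
  exact le_of_pow_le_pow_left₀ (by omega) hxa0 hpow

/-- For flat-tailed `y`, a lower bound on the last component gives `S^λ` membership. -/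
lemma mem_Slam_of_tail (hl0 : 0 < lam) (hl1 : lam < 1) (hy : y ∈ Vn n)
    (hflat : ∀ i : Fin n, 1 ≤ (i : ℕ) → y i = y ⟨n - 1, by have := hl0; omega⟩)
    {x : Fin n → ℝ} (hxV : x ∈ Vn n)
    (hmin : lam * y ⟨n - 1, by have := hl0; omega⟩ ≤ x ⟨n - 1, by have := hl0; omega⟩) :
    x ∈ Slam lam y := by
  refine ⟨hxV, ?_⟩
  intro l hl1' hln
  rcases eq_or_lt_of_le hln with rfl | hllt
  · -- l = n
    have hup : ESum (fun i => lam * y i) l ≤ lam := by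
      have := ESum_le (fun i => lam * y i) Finset.univ
        (by rw [Finset.card_univ, Fintype.card_fin])
      rwa [← Finset.mul_sum, hy.2.1, mul_one] at this
    have hlow : (1:ℝ) ≤ ESum x l := by
      apply le_ESum _ (le_refl _)
      intro s hs
      have : s = Finset.univ := Finset.eq_univ_of_card s (by rw [hs, Fintype.card_fin])
      rw [this, hxV.2.1]
    linarith
  · -- l < n
    set a₀ : Fin n := ⟨n - 1, by omega⟩
    have hup : ESum (fun i => lam * y i) l ≤ l * (lam * y a₀) := by
      set emb : Fin l → Fin n := fun i => ⟨n - l + (i : ℕ), by have := i.isLt; omega⟩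
      have hinj : Function.Injective emb := by
        intro i j hij
        have : n - l + (i:ℕ) = n - l + (j:ℕ) := congrArg Fin.val hij
        exact Fin.ext (by omega)
      have hcard : (Finset.univ.image emb).card = l := by
        rw [Finset.card_image_of_injective _ hinj, Finset.card_univ, Fintype.card_fin]
      have := ESum_le (fun i => lam * y i) (Finset.univ.image emb) hcard
      calc ESum (fun i => lam * y i) l ≤ ∑ i ∈ Finset.univ.image emb, lam * y i := this
        _ = ∑ i : Fin l, lam * y (emb i) := by rw [Finset.sum_image (fun a _ b _ h => hinj h)]
        _ = ∑ _i : Fin l, lam * y a₀ := by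
            refine Finset.sum_congr rfl fun i _ => ?_
            rw [hflat (emb i) (by show 1 ≤ n - l + (i:ℕ); omega)]
        _ = l * (lam * y a₀) := by
            rw [Finset.sum_const, Finset.card_univ, Fintype.card_fin, nsmul_eq_mul]
    have hlow : (l : ℝ) * x a₀ ≤ ESum x l := by
      apply le_ESum _ hln
      intro s hs
      calc (l:ℝ) * x a₀ = ∑ _i ∈ s, x a₀ := by
            rw [Finset.sum_const, hs, nsmul_eq_mul]
        _ ≤ ∑ i ∈ s, x i := Finset.sum_le_sum fun i _ => by
            apply hxV.2.2
            rw [Fin.le_def]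
            exact Nat.le_pred_of_lt i.isLt
    have hll : (0:ℝ) ≤ l := Nat.cast_nonneg l
    nlinarith [hup, hlow, hmin, hll]

/-- Flat tail: `T^λ(y) = S^λ(y)`. -/
lemma flat_T_eq_S (hl0 : 0 < lam) (hl1 : lam < 1) (hy : y ∈ Vn n) (hypos : ∀ i, 0 < y i)
    (hC : y ⟨1, by have := hl0; omega⟩ = y ⟨n - 1, by have := hl0; omega⟩) :
    Tlaminf lam y = Slam lam y := by
  have hflat : ∀ i : Fin n, 1 ≤ (i : ℕ) → y i = y ⟨n - 1, by omega⟩ := by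
    intro i hi
    refine le_antisymm ?_ ?_
    · rw [← hC]; exact hy.2.2 (by rw [Fin.le_def]; simpa using hi)
    · exact hy.2.2 (by rw [Fin.le_def]; have := i.isLt; simp; omega)
  apply Set.Subset.antisymm
  · intro x hx
    exact mem_Slam_of_tail hn hl0 hl1 hy hflat hx.1 (T_min_bound hn hl0 hy hypos hx)
  · exact Slam_subset_Tlaminf

/-- Flat tail: `M^λ(y) = S^λ(y)`. -/
lemma flat_M_eq_S (hl0 : 0 < lam) (hl1 : lam < 1) (hy : y ∈ Vn n) (hypos : ∀ i, 0 < y i)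
    (hC : y ⟨1, by have := hl0; omega⟩ = y ⟨n - 1, by have := hl0; omega⟩) :
    Mlaminf lam y = Slam lam y := by
  have hflat : ∀ i : Fin n, 1 ≤ (i : ℕ) → y i = y ⟨n - 1, by omega⟩ := by
    intro i hi
    refine le_antisymm ?_ ?_
    · rw [← hC]; exact hy.2.2 (by rw [Fin.le_def]; simpa using hi)
    · exact hy.2.2 (by rw [Fin.le_def]; have := i.isLt; simp; omega)
  apply Set.Subset.antisymm
  · intro x hx
    exact mem_Slam_of_tail hn hl0 hl1 hy hflat hx.1 (M_min_bound hn hl0 hy hypos hx)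
  · exact Slam_subset_Mlaminf

end Stmt6Aux

namespace Stmt6Aux
open Finset

/-- Bundled data for the counterexample construction. -/
structure Setup (n : ℕ) where
  y : Fin n → ℝ
  lam : ℝ
  hn : 3 ≤ n
  hpos : ∀ i, 0 < y i
  hsum : ∑ i, y i = 1
  hanti : Antitone y
  hl0 : 0 < lam
  hl1 : lam < 1
  hne : y ⟨1, by omega⟩ ≠ y ⟨n - 1, by omega⟩

namespace Setup

variable {n : ℕ} (S : Setup n)
include S

def iL : Fin n := ⟨n - 1, by have := S.hn; omega⟩
def i1 : Fin n := ⟨1, by have := S.hn; omega⟩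
def i0 : Fin n := ⟨0, by have := S.hn; omega⟩
def t : ℝ := S.y S.iL
def A : ℝ := 1 - S.y S.i0

lemma t_pos : 0 < S.t := S.hpos _

lemma t_le (i : Fin n) : S.t ≤ S.y i := by
  apply S.hanti
  rw [Fin.le_def]
  exact Nat.le_pred_of_lt i.isLt

lemma t_lt_y1 : S.t < S.y S.i1 := by
  refine lt_of_le_of_ne (S.t_le _) (Ne.symm ?_)
  exact S.hne

lemma y_le_y0 (i : Fin n) : S.y i ≤ S.y S.i0 := by
  apply S.hanti
  rw [Fin.le_def]
  exact Nat.zero_le _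

lemma A_eq : S.A = ∑ i ∈ Finset.univ.erase S.i0, S.y i := by
  rw [Finset.sum_erase_eq_sub (Finset.mem_univ _), S.hsum, A]

lemma card_erase_i0 : (Finset.univ.erase S.i0).card = n - 1 := by
  rw [Finset.card_erase_of_mem (Finset.mem_univ _), Finset.card_univ, Fintype.card_fin]

lemma key_strict : ((n : ℝ) - 1) * S.t < S.A := by
  have h1 : ∑ _i ∈ Finset.univ.erase S.i0, S.t < ∑ i ∈ Finset.univ.erase S.i0, S.y i := by
    apply Finset.sum_lt_sum (fun i _ => S.t_le i)
    refine ⟨S.i1, ?_, S.t_lt_y1⟩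
    rw [Finset.mem_erase]
    refine ⟨?_, Finset.mem_univ _⟩
    intro h
    have : (1 : ℕ) = 0 := congrArg Fin.val h
    omega
  rw [Finset.sum_const, S.card_erase_i0, nsmul_eq_mul] at h1
  rw [S.A_eq]
  have hc : ((n - 1 : ℕ) : ℝ) = (n : ℝ) - 1 := by
    have := S.hn
    push_cast [Nat.cast_sub (by omega : 1 ≤ n)]
    ring
  rw [← hc]
  exact h1

lemma n1_pos : (0:ℝ) < (n : ℝ) - 1 := by
  have := S.hn
  have : (3:ℝ) ≤ (n:ℝ) := by exact_mod_cast this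
  linarith

lemma A_pos : 0 < S.A :=
  lt_trans (mul_pos S.n1_pos S.t_pos) S.key_strict

lemma y0_ge_invn : 1 / (n : ℝ) ≤ S.y S.i0 := by
  have h : (1:ℝ) = ∑ i, S.y i := S.hsum.symm
  have h2 : ∑ i, S.y i ≤ ∑ _i : Fin n, S.y S.i0 :=
    Finset.sum_le_sum fun i _ => S.y_le_y0 i
  rw [Finset.sum_const, Finset.card_univ, Fintype.card_fin, nsmul_eq_mul] at h2
  have hn0 : (0:ℝ) < (n:ℝ) := by have := S.n1_pos; linarith
  rw [div_le_iff₀ hn0]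
  nlinarith

lemma A_le : S.A ≤ ((n:ℝ) - 1) / n := by
  have h := S.y0_ge_invn
  have hn0 : (0:ℝ) < (n:ℝ) := by have := S.n1_pos; linarith
  rw [A, le_div_iff₀ hn0]
  rw [div_le_iff₀ hn0] at h
  nlinarith

def bstar : ℝ := S.lam * S.A / ((n : ℝ) - 1)
def b0 : ℝ := (S.lam * S.t + S.bstar) / 2

lemma lamt_lt_bstar : S.lam * S.t < S.bstar := by
  rw [bstar, lt_div_iff₀ S.n1_pos]
  have := S.key_strict
  nlinarith [S.hl0]

lemma lamt_pos : 0 < S.lam * S.t := mul_pos S.hl0 S.t_pos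

lemma bstar_pos : 0 < S.bstar := lt_trans S.lamt_pos S.lamt_lt_bstar

lemma lamt_lt_b0 : S.lam * S.t < S.b0 := by rw [b0]; have := S.lamt_lt_bstar; linarith

lemma b0_lt_bstar : S.b0 < S.bstar := by rw [b0]; have := S.lamt_lt_bstar; linarith

lemma b0_pos : 0 < S.b0 := lt_trans S.lamt_pos S.lamt_lt_b0

lemma n_bstar_le_lam : (n : ℝ) * S.bstar ≤ S.lam := by
  have h1 := S.A_le
  have hn1 := S.n1_pos
  have hn0 : (0:ℝ) < (n:ℝ) := by linarith
  have h3 : S.A * n ≤ (n:ℝ) - 1 := (le_div_iff₀ hn0).mp h1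
  have h4 : (S.A * n) / ((n:ℝ) - 1) ≤ 1 := (div_le_one hn1).mpr h3
  rw [show (n:ℝ) * S.bstar = S.lam * ((S.A * n) / ((n:ℝ) - 1)) from by
    rw [bstar]; ring]
  nlinarith [S.hl0.le]

def sig : ℝ := min ((S.b0 - S.lam * S.t) / (2 * ((n:ℝ) - 1))) ((1 - S.lam) / 2)

lemma sig_pos : 0 < S.sig := by
  apply lt_min
  · apply div_pos (by have := S.lamt_lt_b0; linarith) (by have := S.n1_pos; linarith)
  · have := S.hl1; linarith

lemma sig_le_half : S.sig ≤ (1 - S.lam) / 2 := min_le_right _ _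

lemma sig_le_main : S.sig ≤ (S.b0 - S.lam * S.t) / (2 * ((n:ℝ) - 1)) := min_le_left _ _

def q1 : ℝ := S.lam * S.t / S.b0
def q0 : ℝ := S.lam * S.t / S.bstar

lemma q1_pos : 0 < S.q1 := div_pos S.lamt_pos S.b0_pos
lemma q1_lt_one : S.q1 < 1 := by
  rw [q1, div_lt_one S.b0_pos]; exact S.lamt_lt_b0
lemma q0_pos : 0 < S.q0 := div_pos S.lamt_pos S.bstar_pos

def gam2 : ℝ := (S.b0 - S.lam * S.t) / 2
def gam1 : ℝ := S.sig * (S.lam * S.t)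
def gam : ℝ := min S.gam1 (min S.gam2 (1 - S.lam))

lemma gam2_pos : 0 < S.gam2 := by rw [gam2]; have := S.lamt_lt_b0; linarith
lemma gam1_pos : 0 < S.gam1 := mul_pos S.sig_pos S.lamt_pos
lemma gam_pos : 0 < S.gam := by
  apply lt_min S.gam1_pos
  apply lt_min S.gam2_pos
  have := S.hl1; linarith
lemma gam_le_gam1 : S.gam ≤ S.gam1 := min_le_left _ _
lemma gam_le_gam2 : S.gam ≤ S.gam2 := le_trans (min_le_right _ _) (min_le_left _ _)
lemma gam_le_lam : S.gam ≤ 1 - S.lam := le_trans (min_le_right _ _) (min_le_right _ _)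

lemma filter_ne_nonempty : (Finset.univ.filter (fun i => S.y i ≠ S.t)).Nonempty :=
  ⟨S.i1, Finset.mem_filter.mpr ⟨Finset.mem_univ _, (S.t_lt_y1).ne'⟩⟩

def myr : ℝ :=
  ((Finset.univ.filter (fun i => S.y i ≠ S.t)).image (fun i => S.y i / S.t)).min'
    (S.filter_ne_nonempty.image _)

lemma one_lt_myr : 1 < S.myr := by
  rw [myr, Finset.lt_min'_iff]
  intro r hr
  obtain ⟨i, hi, rfl⟩ := Finset.mem_image.mp hr
  have hne := (Finset.mem_filter.mp hi).2
  have := S.t_le i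
  rw [lt_div_iff₀ S.t_pos, one_mul]
  exact lt_of_le_of_ne this (Ne.symm hne)

lemma myr_le (i : Fin n) (h : S.y i ≠ S.t) : S.myr ≤ S.y i / S.t := by
  apply Finset.min'_le
  exact Finset.mem_image_of_mem _ (Finset.mem_filter.mpr ⟨Finset.mem_univ _, h⟩)

def rho0 : ℝ := min (S.b0 / (S.lam * S.t)) S.myr

lemma one_lt_rho0 : 1 < S.rho0 := by
  apply lt_min _ S.one_lt_myr
  rw [lt_div_iff₀ S.lamt_pos, one_mul]
  exact S.lamt_lt_b0

lemma rho0_le_b0r : S.rho0 ≤ S.b0 / (S.lam * S.t) := min_le_left _ _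
lemma rho0_le_myr : S.rho0 ≤ S.myr := min_le_right _ _

def MD : ℕ := (exists_pow_lt_of_lt_one S.b0_pos S.q1_lt_one).choose
lemma MD_spec : S.q1 ^ S.MD < S.b0 :=
  (exists_pow_lt_of_lt_one S.b0_pos S.q1_lt_one).choose_spec

def EE : ℕ := (pow_unbounded_of_one_lt (1 / S.b0) S.one_lt_rho0).choose
lemma EE_spec : 1 / S.b0 < S.rho0 ^ S.EE :=
  (pow_unbounded_of_one_lt (1 / S.b0) S.one_lt_rho0).choose_spec

def KK : ℕ := S.MD + S.EE + 1
lemma KK_pos : 1 ≤ S.KK := by rw [KK]; omega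

lemma one_lt_inv_q1 : 1 < 1 / S.q1 := by
  rw [lt_div_iff₀ S.q1_pos, one_mul]; exact S.q1_lt_one

def MU : ℕ := (pow_unbounded_of_one_lt (1 / S.b0) S.one_lt_inv_q1).choose
lemma MU_spec : 1 / S.b0 < (1 / S.q1) ^ S.MU :=
  (pow_unbounded_of_one_lt (1 / S.b0) S.one_lt_inv_q1).choose_spec

def kk : ℕ := S.MD + S.MU + 2
lemma kk_pos : 0 < S.kk := by rw [kk]; omega

def epsmax : ℝ :=
  min (S.gam * (S.lam * S.t) ^ (S.KK - 1) / S.KK) (S.gam * S.q0 ^ (S.kk - 1) / S.kk)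

lemma epsmax_pos : 0 < S.epsmax := by
  apply lt_min
  · apply div_pos (mul_pos S.gam_pos (pow_pos S.lamt_pos _))
    have := S.KK_pos; positivity
  · apply div_pos (mul_pos S.gam_pos (pow_pos S.q0_pos _))
    have := S.kk_pos; positivity

def del : ℝ := min S.epsmax (((n:ℝ) - 1) * (S.bstar - S.b0))

lemma del_pos : 0 < S.del := by
  apply lt_min S.epsmax_pos
  exact mul_pos S.n1_pos (by have := S.b0_lt_bstar; linarith)

lemma del_le_epsmax : S.del ≤ S.epsmax := min_le_left _ _

def b : ℝ := S.bstar - S.del / ((n:ℝ) - 1)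

def eps : ℝ := S.lam * S.A - ((n:ℝ) - 1) * S.b

lemma nbstar_eq : ((n:ℝ) - 1) * S.bstar = S.lam * S.A := by
  have h : ((n:ℝ) - 1) ≠ 0 := ne_of_gt S.n1_pos
  rw [bstar]
  field_simp

lemma eps_eq : S.eps = S.del := by
  have h : ((n:ℝ) - 1) ≠ 0 := ne_of_gt S.n1_pos
  rw [eps, b, mul_sub, S.nbstar_eq]
  field_simp
  ring

lemma eps_pos : 0 < S.eps := by rw [S.eps_eq]; exact S.del_pos
lemma eps_le_epsmax : S.eps ≤ S.epsmax := by rw [S.eps_eq]; exact S.del_le_epsmax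

lemma del_le_n1 : S.del ≤ ((n:ℝ) - 1) * (S.bstar - S.b0) := by
  rw [del]; exact min_le_right _ _

lemma b0_le_b : S.b0 ≤ S.b := by
  rw [b]
  have hn1 := S.n1_pos
  have h : S.del / ((n:ℝ)-1) ≤ S.bstar - S.b0 := by
    rw [div_le_iff₀ hn1]
    calc S.del ≤ ((n:ℝ) - 1) * (S.bstar - S.b0) := S.del_le_n1
      _ = (S.bstar - S.b0) * ((n:ℝ) - 1) := by ring
  linarith

lemma b_lt_bstar : S.b < S.bstar := by
  rw [b]
  have h : 0 < S.del / ((n:ℝ) - 1) := div_pos S.del_pos S.n1_pos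
  linarith

lemma b_pos : 0 < S.b := lt_of_lt_of_le S.b0_pos S.b0_le_b
lemma lamt_lt_b : S.lam * S.t < S.b := lt_of_lt_of_le S.lamt_lt_b0 S.b0_le_b

lemma b_le_one : S.b ≤ 1 := by
  have h1 := S.n_bstar_le_lam
  have h2 := S.b_lt_bstar
  have hn : (3:ℝ) ≤ (n:ℝ) := by exact_mod_cast S.hn
  have := S.hl1
  nlinarith [S.bstar_pos]

def q : ℝ := S.lam * S.t / S.b

lemma q_pos : 0 < S.q := div_pos S.lamt_pos S.b_pos
lemma q_lt_one : S.q < 1 := by rw [q, div_lt_one S.b_pos]; exact S.lamt_lt_b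
lemma q_le_q1 : S.q ≤ S.q1 := by
  rw [q, q1]
  apply div_le_div_of_nonneg_left S.lamt_pos.le S.b0_pos S.b0_le_b
lemma q0_le_q : S.q0 ≤ S.q := by
  rw [q, q0]
  apply div_le_div_of_nonneg_left S.lamt_pos.le S.b_pos S.b_lt_bstar.le

def x0 : ℝ := 1 - ((n:ℝ) - 1) * S.b

lemma nb_le_lam : (n:ℝ) * S.b ≤ S.lam := by
  have h2 := S.b_lt_bstar
  have hn0 : (0:ℝ) < (n:ℝ) := by have := S.n1_pos; linarith
  calc (n:ℝ) * S.b ≤ (n:ℝ) * S.bstar := by nlinarith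
    _ ≤ S.lam := S.n_bstar_le_lam

lemma b_sig_le_x0 : S.b + S.sig ≤ S.x0 := by
  rw [x0]
  have h1 := S.nb_le_lam
  have h2 := S.sig_le_half
  have := S.hl1
  nlinarith

lemma x0_lt_one : S.x0 < 1 := by
  rw [x0]
  have h := mul_pos S.n1_pos S.b_pos
  linarith

lemma x0_gt : 1 - S.lam * S.A < S.x0 := by
  rw [x0]
  have := S.eps_pos
  rw [eps] at this
  linarith

lemma lamy0_le_x0 : S.lam * S.y S.i0 ≤ S.x0 := by
  have h := S.x0_gt
  have : S.lam * S.A = S.lam - S.lam * S.y S.i0 := by rw [A]; ring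
  have h1 := S.hl1
  linarith

def xx : Fin n → ℝ := fun i => if i = S.i0 then S.x0 else S.b
def zz : Fin n → ℝ := fun i => S.lam * S.y i

lemma xx_pos (i : Fin n) : 0 < S.xx i := by
  simp only [xx]
  split
  · have := S.b_sig_le_x0; have := S.b_pos; have := S.sig_pos; linarith
  · exact S.b_pos

lemma b_le_xx (i : Fin n) : S.b ≤ S.xx i := by
  simp only [xx]
  split
  · have := S.b_sig_le_x0; have := S.sig_pos; linarith
  · exact le_refl _

lemma xx_le_x0 (i : Fin n) : S.xx i ≤ S.x0 := by
  simp only [xx]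
  split
  · exact le_refl _
  · have := S.b_sig_le_x0; have := S.sig_pos; linarith

lemma zz_pos (i : Fin n) : 0 < S.zz i := mul_pos S.hl0 (S.hpos i)

lemma lamt_le_zz (i : Fin n) : S.lam * S.t ≤ S.zz i := by
  show S.lam * S.t ≤ S.lam * S.y i
  have := S.t_le i
  nlinarith [S.hl0]

lemma zz_le_x0 (i : Fin n) : S.zz i ≤ S.x0 := by
  have h1 : S.zz i ≤ S.lam * S.y S.i0 := by
    show S.lam * S.y i ≤ S.lam * S.y S.i0
    nlinarith [S.y_le_y0 i, S.hl0]
  exact le_trans h1 S.lamy0_le_x0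

lemma sum_xx : ∑ i, S.xx i = 1 := by
  rw [← Finset.add_sum_erase _ _ (Finset.mem_univ S.i0)]
  have h1 : S.xx S.i0 = S.x0 := by simp only [xx, if_pos]
  have h2 : ∑ i ∈ Finset.univ.erase S.i0, S.xx i
      = ∑ _i ∈ Finset.univ.erase S.i0, S.b := by
    refine Finset.sum_congr rfl fun i hi => ?_
    simp only [xx, if_neg (Finset.mem_erase.mp hi).1]
  rw [h1, h2, Finset.sum_const, S.card_erase_i0, nsmul_eq_mul]
  have hc : ((n - 1 : ℕ) : ℝ) = (n : ℝ) - 1 := by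
    have := S.hn
    push_cast [Nat.cast_sub (by omega : 1 ≤ n)]
    ring
  rw [hc, x0]
  ring

lemma sum_zz : ∑ i, S.zz i = S.lam := by
  show ∑ i, S.lam * S.y i = S.lam
  rw [← Finset.mul_sum, S.hsum, mul_one]

lemma xx_anti : Antitone S.xx := by
  intro i j hij
  simp only [xx]
  by_cases hj : j = S.i0
  · have hi : i = S.i0 := by
      have h2 : (i:ℕ) ≤ (j:ℕ) := hij
      have h3 : (j:ℕ) = 0 := by rw [hj]; rfl
      exact Fin.ext (by omega)
    rw [if_pos hi, if_pos hj]
  · rw [if_neg hj]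
    split
    · have := S.b_sig_le_x0; have := S.sig_pos; linarith
    · exact le_refl _

lemma xx_mem_Vn : S.xx ∈ Vn n :=
  ⟨fun i => (S.xx_pos i).le, S.sum_xx, S.xx_anti⟩

end Setup
end Stmt6Aux

namespace Stmt6Aux
namespace Setup
open Finset

variable {n : ℕ} (S : Setup n)
include S

/-- The comparison function `g(u) = W(x,u) - W(z,u)`. -/
def gap (u : ℝ) : ℝ := W S.xx u - W S.zz u

lemma cast_n1 : ((n - 1 : ℕ) : ℝ) = (n : ℝ) - 1 := by
  have := S.hn
  push_cast [Nat.cast_sub (by omega : 1 ≤ n)]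
  ring

lemma gap_eq (u : ℝ) : S.gap u = ∑ i, (min (S.xx i) u - min (S.zz i) u) := by
  rw [gap, W, W, ← Finset.sum_sub_distrib]

lemma card_erase_iL : (Finset.univ.erase S.iL).card = n - 1 := by
  rw [Finset.card_erase_of_mem (Finset.mem_univ _), Finset.card_univ, Fintype.card_fin]

lemma zz_iL : S.zz S.iL = S.lam * S.t := rfl

lemma bq_eq : S.b * S.q = S.lam * S.t := by
  rw [q, mul_div_cancel₀]
  exact ne_of_gt S.b_pos

/-- positivity region: `u ≤ b`. -/
lemma gap_nonneg {u : ℝ} (hu : u ≤ S.b) : 0 ≤ S.gap u := by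
  rw [S.gap_eq]
  apply Finset.sum_nonneg
  intro i _
  have h1 : min (S.xx i) u = u := min_eq_right (le_trans hu (S.b_le_xx i))
  have h2 : min (S.zz i) u ≤ u := min_le_right _ _
  linarith

/-- rising region: `λt ≤ u ≤ b`. -/
lemma gap_rise {u : ℝ} (hl : S.lam * S.t ≤ u) (hu : u ≤ S.b) :
    u - S.lam * S.t ≤ S.gap u := by
  rw [S.gap_eq, ← Finset.add_sum_erase _ _ (Finset.mem_univ S.iL)]
  have h1 : min (S.xx S.iL) u - min (S.zz S.iL) u = u - S.lam * S.t := by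
    rw [min_eq_right (le_trans hu (S.b_le_xx _)), S.zz_iL, min_eq_left hl]
  rw [h1]
  have h2 : 0 ≤ ∑ i ∈ Finset.univ.erase S.iL, (min (S.xx i) u - min (S.zz i) u) := by
    apply Finset.sum_nonneg
    intro i _
    have := min_eq_right (le_trans hu (S.b_le_xx i))
    have := min_le_right (S.zz i) u
    linarith
  linarith

lemma Wzz_le_tail {u : ℝ} (hl : S.lam * S.t ≤ u) :
    W S.zz u ≤ ((n:ℝ) - 1) * u + S.lam * S.t := by
  rw [W, ← Finset.add_sum_erase _ _ (Finset.mem_univ S.iL)]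
  have h1 : min (S.zz S.iL) u = S.lam * S.t := by rw [S.zz_iL, min_eq_left hl]
  have h2 : ∑ i ∈ Finset.univ.erase S.iL, min (S.zz i) u
      ≤ ∑ _i ∈ Finset.univ.erase S.iL, u :=
    Finset.sum_le_sum fun i _ => min_le_right _ _
  rw [Finset.sum_const, S.card_erase_iL, nsmul_eq_mul, S.cast_n1] at h2
  linarith

/-- buffer region: `b ≤ u ≤ b + σ`. -/
lemma gap_buffer {u : ℝ} (hl : S.b ≤ u) (hu : u ≤ S.b + S.sig) :
    S.gam2 ≤ S.gap u := by
  have hlt : S.lam * S.t ≤ u := le_trans S.lamt_lt_b.le hl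
  have hWz := S.Wzz_le_tail hlt
  have hWx : W S.xx u = u + ((n:ℝ) - 1) * S.b := by
    rw [W, ← Finset.add_sum_erase _ _ (Finset.mem_univ S.i0)]
    have h1 : min (S.xx S.i0) u = u := by
      apply min_eq_right
      have : S.xx S.i0 = S.x0 := by simp only [xx, if_pos]
      rw [this]
      exact le_trans hu S.b_sig_le_x0
    have h2 : ∑ i ∈ Finset.univ.erase S.i0, min (S.xx i) u
        = ∑ _i ∈ Finset.univ.erase S.i0, S.b := by
      refine Finset.sum_congr rfl fun i hi => ?_
      have : S.xx i = S.b := by simp only [xx, if_neg (Finset.mem_erase.mp hi).1]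
      rw [this, min_eq_left hl]
    rw [h1, h2, Finset.sum_const, S.card_erase_i0, nsmul_eq_mul, S.cast_n1]
  have hsig := S.sig_le_main
  have hn1 := S.n1_pos
  have hb0 := S.b0_le_b
  have key : (u - S.lam * S.t) - ((n:ℝ)-1) * (u - S.b) ≤ S.gap u := by
    rw [gap, hWx]; linarith
  have h3 : u - S.b ≤ S.sig := by linarith
  have h4 : S.b - S.lam * S.t ≤ u - S.lam * S.t := by linarith
  have h5 : ((n:ℝ)-1) * (u - S.b) ≤ ((n:ℝ)-1) * S.sig := by nlinarith
  have h6 : ((n:ℝ)-1) * S.sig ≤ (S.b0 - S.lam * S.t) / 2 := by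
    calc ((n:ℝ)-1) * S.sig ≤ ((n:ℝ)-1) * ((S.b0 - S.lam*S.t) / (2*((n:ℝ)-1))) := by
          nlinarith [S.sig_le_main]
      _ = (S.b0 - S.lam * S.t) / 2 := by field_simp
  rw [gam2]
  have : S.b0 - S.lam * S.t ≤ S.b - S.lam * S.t := by linarith
  linarith

/-- global lower bound `-ε`. -/
lemma gap_ge_neg_eps (u : ℝ) : -S.eps ≤ S.gap u := by
  by_cases hu : u ≤ S.b
  · have := S.gap_nonneg hu
    have := S.eps_pos
    linarith
  · push_neg at hu
    have hWx : W S.xx u = min S.x0 u + ((n:ℝ) - 1) * S.b := by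
      rw [W, ← Finset.add_sum_erase _ _ (Finset.mem_univ S.i0)]
      have h1 : min (S.xx S.i0) u = min S.x0 u := by
        have : S.xx S.i0 = S.x0 := by simp only [xx, if_pos]
        rw [this]
      have h2 : ∑ i ∈ Finset.univ.erase S.i0, min (S.xx i) u
          = ∑ _i ∈ Finset.univ.erase S.i0, S.b := by
        refine Finset.sum_congr rfl fun i hi => ?_
        have : S.xx i = S.b := by simp only [xx, if_neg (Finset.mem_erase.mp hi).1]
        rw [this, min_eq_left hu.le]
      rw [h1, h2, Finset.sum_const, S.card_erase_i0, nsmul_eq_mul, S.cast_n1]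
    have hWz : W S.zz u ≤ min (S.zz S.i0) u + S.lam * S.A := by
      rw [W, ← Finset.add_sum_erase _ _ (Finset.mem_univ S.i0)]
      have h2 : ∑ i ∈ Finset.univ.erase S.i0, min (S.zz i) u
          ≤ ∑ i ∈ Finset.univ.erase S.i0, S.zz i :=
        Finset.sum_le_sum fun i _ => min_le_left _ _
      have h3 : ∑ i ∈ Finset.univ.erase S.i0, S.zz i = S.lam * S.A := by
        show ∑ i ∈ Finset.univ.erase S.i0, S.lam * S.y i = S.lam * S.A
        rw [← Finset.mul_sum, ← S.A_eq]
      linarith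
    have h4 : min (S.zz S.i0) u ≤ min S.x0 u :=
      min_le_min (S.zz_le_x0 S.i0) (le_refl u)
    rw [gap, eps, hWx]
    linarith

/-- plateau: `u ≥ x₀`. -/
lemma gap_plateau {u : ℝ} (hu : S.x0 ≤ u) : S.gap u = 1 - S.lam := by
  have hWx : W S.xx u = 1 := by
    rw [W, Finset.sum_congr rfl (fun i _ => min_eq_left (le_trans (S.xx_le_x0 i) hu))]
    exact S.sum_xx
  have hWz : W S.zz u = S.lam := by
    rw [W, Finset.sum_congr rfl (fun i _ => min_eq_left (le_trans (S.zz_le_x0 i) hu))]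
    exact S.sum_zz
  rw [gap, hWx, hWz]

/-- dip characterization. -/
lemma dip_range {u : ℝ} (hu : S.gap u < 0) : S.b + S.sig < u ∧ u < S.x0 := by
  constructor
  · by_contra h
    push_neg at h
    by_cases hb : u ≤ S.b
    · exact absurd (S.gap_nonneg hb) (by linarith)
    · push_neg at hb
      have := S.gap_buffer hb.le h
      have := S.gam2_pos
      linarith
  · by_contra h
    push_neg at h
    rw [S.gap_plateau h] at hu
    have := S.hl1
    linarith

/-- Landing lemma: from the dip, hop down to the gain zone. -/
lemma land {u : ℝ} (hu1 : S.b + S.sig < u) (hu2 : u < S.x0) :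
    ∃ m : ℕ, 1 ≤ m ∧ m ≤ S.MD ∧ S.gam ≤ S.gap (u * S.q ^ m) := by
  classical
  have hq0 := S.q_pos
  have hub : u ≤ 1 := le_trans hu2.le S.x0_lt_one.le
  have hupos : 0 < u := by
    have := S.b_pos; have := S.sig_pos; linarith
  have hP_MD : u * S.q ^ S.MD ≤ S.b + S.sig := by
    have h1 : S.q ^ S.MD ≤ S.q1 ^ S.MD := pow_le_pow_left₀ hq0.le S.q_le_q1 _
    have h2 : u * S.q ^ S.MD ≤ 1 * S.q1 ^ S.MD := by
      apply mul_le_mul hub h1 (pow_nonneg hq0.le _) zero_le_one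
    have := S.MD_spec
    have := S.b0_le_b
    have := S.sig_pos
    linarith
  have hex : ∃ m, u * S.q ^ m ≤ S.b + S.sig := ⟨S.MD, hP_MD⟩
  set m := Nat.find hex with hmdef
  have hm : u * S.q ^ m ≤ S.b + S.sig := Nat.find_spec hex
  have hmle : m ≤ S.MD := Nat.find_le hP_MD
  have hm1 : 1 ≤ m := by
    rcases Nat.eq_zero_or_pos m with h0 | h
    · exfalso
      have := Nat.find_spec hex
      rw [← hmdef, h0] at this
      simp only [pow_zero, mul_one] at this
      linarith
    · exact h
  have hprev : S.b + S.sig < u * S.q ^ (m - 1) := by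
    have := Nat.find_min hex (m := m - 1) (by omega)
    push_neg at this
    exact this
  have hlow : (S.b + S.sig) * S.q < u * S.q ^ m := by
    calc (S.b + S.sig) * S.q < (u * S.q ^ (m - 1)) * S.q := by nlinarith
      _ = u * S.q ^ m := by
          rw [mul_assoc, ← pow_succ]
          congr 2
          omega
  refine ⟨m, hm1, hmle, ?_⟩
  set w := u * S.q ^ m with hwdef
  have hbq : S.b * S.q = S.lam * S.t := S.bq_eq
  have hsigq : 0 < S.sig * S.q := mul_pos S.sig_pos hq0
  by_cases hw : w ≤ S.b
  · -- rising zone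
    have hl : S.lam * S.t ≤ w := by nlinarith [S.sig_pos]
    have h1 := S.gap_rise hl hw
    have h2 : S.sig * (S.lam * S.t) ≤ w - S.lam * S.t := by
      have h3 : (S.b + S.sig) * S.q - S.b * S.q = S.sig * S.q := by ring
      have h4 : S.sig * S.q ≤ w - S.lam * S.t := by nlinarith
      have h5 : S.lam * S.t ≤ S.q := by
        rw [q]
        rw [div_eq_mul_inv]
        have hb1 := S.b_le_one
        have hbi : 1 ≤ S.b⁻¹ := by
          rw [le_inv_comm₀]
          · simpa using hb1
          · exact one_pos
          · exact S.b_pos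
        nlinarith [S.lamt_pos]
      nlinarith [S.sig_pos, S.lamt_pos]
    have := S.gam_le_gam1
    rw [gam1] at this
    linarith
  · push_neg at hw
    have := S.gap_buffer hw.le hm
    have := S.gam_le_gam2
    linarith

/-- `x ∉ S^λ(y)`. -/
lemma xx_not_Slam : S.xx ∉ Slam S.lam S.y := by
  rintro ⟨-, hsup⟩
  have hn := S.hn
  have h := hsup (n - 1) (by omega) (by omega)
  have hup : ESum S.xx (n - 1) ≤ ((n:ℝ) - 1) * S.b := by
    have h1 := ESum_le S.xx (Finset.univ.erase S.i0) S.card_erase_i0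
    have h2 : ∑ i ∈ Finset.univ.erase S.i0, S.xx i = ((n:ℝ) - 1) * S.b := by
      rw [Finset.sum_congr rfl (fun i hi => show S.xx i = S.b by
        simp only [xx, if_neg (Finset.mem_erase.mp hi).1]),
        Finset.sum_const, S.card_erase_i0, nsmul_eq_mul, S.cast_n1]
    linarith
  have hlow : S.lam * S.A ≤ ESum (fun i => S.lam * S.y i) (n - 1) := by
    apply le_ESum _ (by omega)
    intro s hs
    have hcompl : sᶜ.card = 1 := by
      rw [Finset.card_compl, hs, Fintype.card_fin]
      omega
    obtain ⟨i, hi⟩ := Finset.card_eq_one.mp hcompl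
    have hseq : s = Finset.univ.erase i := by
      have : sᶜᶜ = {i}ᶜ := by rw [hi]
      rw [compl_compl] at this
      rw [this, Finset.compl_singleton]
    rw [hseq]
    have : ∑ j ∈ Finset.univ.erase i, S.lam * S.y j = S.lam * (1 - S.y i) := by
      rw [← Finset.mul_sum, Finset.sum_erase_eq_sub (Finset.mem_univ _), S.hsum]
    rw [this, A]
    have := S.y_le_y0 i
    nlinarith [S.hl0]
  have := S.eps_pos
  rw [eps] at this
  linarith

end Setup
end Stmt6Aux

namespace Stmt6Aux
namespace Setup
open Finset

variable {n : ℕ} (S : Setup n)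
include S

def Zc : ℝ := ∑ j : Fin S.kk, S.q ^ (j : ℕ)

lemma Zc_pos : 0 < S.Zc := by
  rw [Zc]
  apply Finset.sum_pos (fun j _ => pow_pos S.q_pos _)
  rw [Finset.univ_nonempty_iff]
  have := S.kk_pos
  exact Fin.pos_iff_nonempty.mp this

lemma Zc_le_kk : S.Zc ≤ (S.kk : ℝ) := by
  rw [Zc]
  calc ∑ j : Fin S.kk, S.q ^ (j:ℕ) ≤ ∑ _j : Fin S.kk, (1:ℝ) :=
      Finset.sum_le_sum fun j _ => pow_le_one₀ S.q_pos.le S.q_lt_one.le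
    _ = (S.kk : ℝ) := by rw [Finset.sum_const, Finset.card_univ, Fintype.card_fin,
        nsmul_eq_mul, mul_one]

def cc : Fin S.kk → ℝ := fun j => S.q ^ (j : ℕ) / S.Zc

lemma cc_pos (j : Fin S.kk) : 0 < S.cc j :=
  div_pos (pow_pos S.q_pos _) S.Zc_pos

lemma cc_sum : ∑ j, S.cc j = 1 := by
  show ∑ j : Fin S.kk, S.q ^ (j:ℕ) / S.Zc = 1
  rw [← Finset.sum_div, ← Zc, div_self (ne_of_gt S.Zc_pos)]

lemma cc_anti : Antitone S.cc := by
  intro i j hij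
  show S.q ^ (j:ℕ) / S.Zc ≤ S.q ^ (i:ℕ) / S.Zc
  apply (div_le_div_iff_of_pos_right S.Zc_pos).mpr
  exact pow_le_pow_of_le_one S.q_pos.le S.q_lt_one.le hij

lemma cc_ge (j : Fin S.kk) : S.q0 ^ (S.kk - 1) / (S.kk : ℝ) ≤ S.cc j := by
  show S.q0 ^ (S.kk - 1) / (S.kk : ℝ) ≤ S.q ^ (j:ℕ) / S.Zc
  apply div_le_div₀ (pow_pos S.q_pos _).le _ S.Zc_pos S.Zc_le_kk
  calc S.q0 ^ (S.kk - 1) ≤ S.q ^ (S.kk - 1) :=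
      pow_le_pow_left₀ S.q0_pos.le S.q0_le_q _
    _ ≤ S.q ^ (j:ℕ) := by
      apply pow_le_pow_of_le_one S.q_pos.le S.q_lt_one.le
      have := j.isLt
      omega

lemma eps_le_T : S.eps ≤ S.gam * S.q0 ^ (S.kk - 1) / (S.kk : ℝ) :=
  le_trans S.eps_le_epsmax (min_le_right _ _)

lemma eps_le_M : S.eps ≤ S.gam * (S.lam * S.t) ^ (S.KK - 1) / (S.KK : ℝ) :=
  le_trans S.eps_le_epsmax (min_le_left _ _)

/-- Core positivity for the ladder catalyst. -/
lemma Tsum_nonneg (θ : ℝ) : 0 ≤ ∑ j : Fin S.kk, S.cc j * S.gap (θ / S.cc j) := by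
  by_cases hall : ∀ j : Fin S.kk, 0 ≤ S.gap (θ / S.cc j)
  · exact Finset.sum_nonneg fun j _ => mul_nonneg (S.cc_pos j).le (hall j)
  · push_neg at hall
    obtain ⟨j₀, hneg⟩ := hall
    set u₀ := θ / S.cc j₀ with hu₀def
    obtain ⟨hdip1, hdip2⟩ := S.dip_range hneg
    have hθ : θ = u₀ * S.cc j₀ := by
      rw [hu₀def, div_mul_cancel₀]
      exact ne_of_gt (S.cc_pos j₀)
    have hqne : S.q ≠ 0 := ne_of_gt S.q_pos
    have hZne : S.Zc ≠ 0 := ne_of_gt S.Zc_pos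
    -- find the partner index and its gain
    have main : ∃ j' : Fin S.kk, S.gam ≤ S.gap (θ / S.cc j') := by
      by_cases hMD : S.MD ≤ (j₀ : ℕ)
      · obtain ⟨m, hm1, hm2, hgain⟩ := S.land hdip1 hdip2
        have hmj : m ≤ (j₀ : ℕ) := le_trans hm2 hMD
        refine ⟨⟨(j₀ : ℕ) - m, by have := j₀.isLt; omega⟩, ?_⟩
        have hval : θ / S.cc ⟨(j₀ : ℕ) - m, by have := j₀.isLt; omega⟩
            = u₀ * S.q ^ m := by
          have hcc1 : S.cc j₀ = S.q ^ (j₀:ℕ) / S.Zc := rfl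
          have hcc2 : S.cc ⟨(j₀ : ℕ) - m, by have := j₀.isLt; omega⟩
              = S.q ^ ((j₀:ℕ) - m) / S.Zc := rfl
          have hpow : S.q ^ ((j₀:ℕ) - m) * S.q ^ m = S.q ^ (j₀:ℕ) :=
            pow_sub_mul_pow S.q hmj
          rw [hθ, hcc1, hcc2, ← hpow]
          have h1 : S.q ^ ((j₀:ℕ) - m) ≠ 0 := ne_of_gt (pow_pos S.q_pos _)
          field_simp
        rw [hval]
        exact hgain
      · push_neg at hMD
        refine ⟨⟨S.kk - 1, by have := S.kk_pos; omega⟩, ?_⟩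
        set d : ℕ := S.kk - 1 - (j₀ : ℕ) with hddef
        have hkk : S.kk = S.MD + S.MU + 2 := rfl
        have hd : S.MU ≤ d := by
          have := j₀.isLt
          omega
        have hval : θ / S.cc ⟨S.kk - 1, by have := S.kk_pos; omega⟩
            = u₀ / S.q ^ d := by
          have hcc1 : S.cc j₀ = S.q ^ (j₀:ℕ) / S.Zc := rfl
          have hcc2 : S.cc ⟨S.kk - 1, by have := S.kk_pos; omega⟩
              = S.q ^ (S.kk - 1) / S.Zc := rfl
          have hpow : S.q ^ d * S.q ^ (j₀:ℕ) = S.q ^ (S.kk - 1) := by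
            rw [← pow_add]
            congr 1
            have := j₀.isLt
            omega
          rw [hθ, hcc1, hcc2, ← hpow]
          have h1 : S.q ^ d ≠ 0 := ne_of_gt (pow_pos S.q_pos _)
          have h2 : S.q ^ (j₀:ℕ) ≠ 0 := ne_of_gt (pow_pos S.q_pos _)
          field_simp
        have hq1MU : S.q1 ^ S.MU < S.b0 := by
          have hs := S.MU_spec
          have h1 : (1 / S.q1) ^ S.MU = 1 / S.q1 ^ S.MU := by
            rw [one_div, one_div, inv_pow]
          rw [h1] at hs
          have hq1p : 0 < S.q1 ^ S.MU := pow_pos S.q1_pos _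
          have hb0p := S.b0_pos
          rw [div_lt_div_iff₀ hb0p hq1p] at hs
          nlinarith
        have hqd : S.q ^ d < S.b0 := by
          calc S.q ^ d ≤ S.q ^ S.MU :=
              pow_le_pow_of_le_one S.q_pos.le S.q_lt_one.le hd
            _ ≤ S.q1 ^ S.MU := pow_le_pow_left₀ S.q_pos.le S.q_le_q1 _
            _ < S.b0 := hq1MU
        have hplat : S.x0 ≤ u₀ / S.q ^ d := by
          have hqdp : 0 < S.q ^ d := pow_pos S.q_pos _
          have h1 : 1 < u₀ / S.q ^ d := by
            rw [lt_div_iff₀ hqdp]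
            have := S.b0_le_b
            have := S.sig_pos
            nlinarith
          have := S.x0_lt_one
          linarith
        rw [hval, S.gap_plateau hplat]
        exact S.gam_le_lam
    obtain ⟨j', hj'⟩ := main
    rw [← Finset.add_sum_erase _ _ (Finset.mem_univ j')]
    have hgain2 : S.eps ≤ S.cc j' * S.gap (θ / S.cc j') := by
      calc S.eps ≤ S.gam * S.q0 ^ (S.kk - 1) / (S.kk : ℝ) := S.eps_le_T
        _ = (S.q0 ^ (S.kk - 1) / (S.kk : ℝ)) * S.gam := by ring
        _ ≤ S.cc j' * S.gam := by
            apply mul_le_mul_of_nonneg_right (S.cc_ge j') S.gam_pos.le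
        _ ≤ S.cc j' * S.gap (θ / S.cc j') := by
            apply mul_le_mul_of_nonneg_left hj' (S.cc_pos j').le
    have hrest : -S.eps ≤ ∑ j ∈ Finset.univ.erase j', S.cc j * S.gap (θ / S.cc j) := by
      have h1 : ∀ j ∈ Finset.univ.erase j',
          S.cc j * (-S.eps) ≤ S.cc j * S.gap (θ / S.cc j) := fun j _ =>
        mul_le_mul_of_nonneg_left (S.gap_ge_neg_eps _) (S.cc_pos j).le
      have h2 : ∑ j ∈ Finset.univ.erase j', S.cc j * (-S.eps)
          ≤ ∑ j ∈ Finset.univ.erase j', S.cc j * S.gap (θ / S.cc j) :=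
        Finset.sum_le_sum h1
      have h3 : ∑ j ∈ Finset.univ.erase j', S.cc j * (-S.eps)
          = (∑ j ∈ Finset.univ.erase j', S.cc j) * (-S.eps) := by
        rw [Finset.sum_mul]
      have h4 : ∑ j ∈ Finset.univ.erase j', S.cc j ≤ 1 := by
        rw [← S.cc_sum]
        apply Finset.sum_le_sum_of_subset_of_nonneg (Finset.erase_subset _ _)
        exact fun j _ _ => (S.cc_pos j).le
      have h5 : 0 ≤ ∑ j ∈ Finset.univ.erase j', S.cc j :=
        Finset.sum_nonneg fun j _ => (S.cc_pos j).le
      have := S.eps_pos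
      nlinarith
    linarith

/-- `x ∈ T^λ(y)`. -/
lemma xx_mem_T : S.xx ∈ Tlaminf S.lam S.y := by
  refine ⟨S.xx_mem_Vn, S.kk, S.cc, S.kk_pos, S.cc_pos, S.cc_sum, S.cc_anti, ?_⟩
  apply supMaj_of_W
  intro θ
  have h1 : W (fun i : Fin (n * S.kk) => S.lam * tensor S.y S.cc i) θ
      = W (tensor S.zz S.cc) θ := by
    rw [W, W]
    refine Finset.sum_congr rfl fun i _ => ?_
    congr 1
    rw [tensor, tensor]
    show S.lam * (S.y _ * S.cc _) = (S.lam * S.y _) * S.cc _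
    ring
  rw [h1, W_tensor S.zz S.cc S.cc_pos θ, W_tensor S.xx S.cc S.cc_pos θ]
  have h2 : ∑ j, S.cc j * W S.xx (θ / S.cc j) - ∑ j, S.cc j * W S.zz (θ / S.cc j)
      = ∑ j : Fin S.kk, S.cc j * S.gap (θ / S.cc j) := by
    rw [← Finset.sum_sub_distrib]
    refine Finset.sum_congr rfl fun j _ => ?_
    rw [gap]
    ring
  have := S.Tsum_nonneg θ
  linarith

end Setup
end Stmt6Aux

namespace Stmt6Aux
namespace Setup
open Finset

variable {n : ℕ} (S : Setup n)
include S

lemma lamt_le_xx (i : Fin n) : S.lam * S.t ≤ S.xx i :=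
  le_trans S.lamt_lt_b.le (S.b_le_xx i)

lemma prodx_ge (j₁ : ℕ) (f : Fin j₁ → Fin n) :
    (S.lam * S.t) ^ j₁ ≤ ∏ a, S.xx (f a) := by
  rw [show (S.lam * S.t) ^ j₁ = ∏ _a : Fin j₁, S.lam * S.t by
    rw [Finset.prod_const, Finset.card_univ, Fintype.card_fin]]
  exact Finset.prod_le_prod (fun a _ => S.lamt_pos.le) (fun a _ => S.lamt_le_xx _)

lemma prodz_ge (j₂ : ℕ) (g : Fin j₂ → Fin n) :
    (S.lam * S.t) ^ j₂ ≤ ∏ a, S.zz (g a) := by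
  rw [show (S.lam * S.t) ^ j₂ = ∏ _a : Fin j₂, S.lam * S.t by
    rw [Finset.prod_const, Finset.card_univ, Fintype.card_fin]]
  exact Finset.prod_le_prod (fun a _ => S.lamt_pos.le) (fun a _ => S.lamt_le_zz _)

lemma prodx_pos (j₁ : ℕ) (f : Fin j₁ → Fin n) : 0 < ∏ a, S.xx (f a) :=
  Finset.prod_pos fun a _ => S.xx_pos _

lemma prodz_pos (j₂ : ℕ) (g : Fin j₂ → Fin n) : 0 < ∏ a, S.zz (g a) :=
  Finset.prod_pos fun a _ => S.zz_pos _

lemma PP_pos (j₁ j₂ : ℕ) (f : Fin j₁ → Fin n) (g : Fin j₂ → Fin n) :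
    0 < (∏ a, S.xx (f a)) * (∏ a, S.zz (g a)) :=
  mul_pos (S.prodx_pos _ f) (S.prodz_pos _ g)

lemma PP_ge (j₁ j₂ : ℕ) (f : Fin j₁ → Fin n) (g : Fin j₂ → Fin n) :
    (S.lam * S.t) ^ (j₁ + j₂) ≤ (∏ a, S.xx (f a)) * (∏ a, S.zz (g a)) := by
  rw [pow_add]
  exact mul_le_mul (S.prodx_ge _ f) (S.prodz_ge _ g) (pow_pos S.lamt_pos _).le
    (S.prodx_pos _ f).le

lemma block_mass (j₁ j₂ : ℕ) :
    ∑ f : Fin j₁ → Fin n, ∑ g : Fin j₂ → Fin n,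
      (∏ a, S.xx (f a)) * (∏ a, S.zz (g a)) ≤ 1 := by
  have h1 : ∑ f : Fin j₁ → Fin n, ∑ g : Fin j₂ → Fin n,
      (∏ a, S.xx (f a)) * (∏ a, S.zz (g a))
      = (∑ f : Fin j₁ → Fin n, ∏ a, S.xx (f a))
        * (∑ g : Fin j₂ → Fin n, ∏ a, S.zz (g a)) := by
    rw [Finset.sum_mul_sum]
  rw [h1, sum_prod_tuple S.xx j₁, sum_prod_tuple S.zz j₂, S.sum_xx, S.sum_zz, one_pow,
    one_mul]
  exact pow_le_one₀ S.hl0.le S.hl1.le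

/-- Each mixed block is bounded below by `-ε`. -/
lemma block_ge (j₁ j₂ : ℕ) (θ : ℝ) :
    -S.eps ≤ ∑ f : Fin j₁ → Fin n, ∑ g : Fin j₂ → Fin n,
      ((∏ a, S.xx (f a)) * (∏ a, S.zz (g a)))
        * S.gap (θ / ((∏ a, S.xx (f a)) * (∏ a, S.zz (g a)))) := by
  have h1 : ∀ f : Fin j₁ → Fin n, ∀ g : Fin j₂ → Fin n,
      ((∏ a, S.xx (f a)) * (∏ a, S.zz (g a))) * (-S.eps)
        ≤ ((∏ a, S.xx (f a)) * (∏ a, S.zz (g a)))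
          * S.gap (θ / ((∏ a, S.xx (f a)) * (∏ a, S.zz (g a)))) := fun f g =>
    mul_le_mul_of_nonneg_left (S.gap_ge_neg_eps _) (S.PP_pos _ _ f g).le
  have h2 : ∑ f : Fin j₁ → Fin n, ∑ g : Fin j₂ → Fin n,
      ((∏ a, S.xx (f a)) * (∏ a, S.zz (g a))) * (-S.eps)
      ≤ ∑ f : Fin j₁ → Fin n, ∑ g : Fin j₂ → Fin n,
        ((∏ a, S.xx (f a)) * (∏ a, S.zz (g a)))
          * S.gap (θ / ((∏ a, S.xx (f a)) * (∏ a, S.zz (g a)))) :=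
    Finset.sum_le_sum fun f _ => Finset.sum_le_sum fun g _ => h1 f g
  have h3 : ∑ f : Fin j₁ → Fin n, ∑ g : Fin j₂ → Fin n,
      ((∏ a, S.xx (f a)) * (∏ a, S.zz (g a))) * (-S.eps)
      = (∑ f : Fin j₁ → Fin n, ∑ g : Fin j₂ → Fin n,
          (∏ a, S.xx (f a)) * (∏ a, S.zz (g a))) * (-S.eps) := by
    rw [Finset.sum_mul]
    refine Finset.sum_congr rfl fun f _ => by rw [Finset.sum_mul]
  have h4 := S.block_mass j₁ j₂
  have h5 : 0 ≤ ∑ f : Fin j₁ → Fin n, ∑ g : Fin j₂ → Fin n,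
      (∏ a, S.xx (f a)) * (∏ a, S.zz (g a)) :=
    Finset.sum_nonneg fun f _ => Finset.sum_nonneg fun g _ => (S.PP_pos _ _ f g).le
  have := S.eps_pos
  nlinarith [h2, h3]

/-- Block bound with an identified gain term. -/
lemma block_ge_with (j₁ j₂ : ℕ) (θ : ℝ) (f' : Fin j₁ → Fin n) (g' : Fin j₂ → Fin n)
    {G : ℝ}
    (hgain : G ≤ ((∏ a, S.xx (f' a)) * (∏ a, S.zz (g' a)))
      * S.gap (θ / ((∏ a, S.xx (f' a)) * (∏ a, S.zz (g' a))))) :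
    G - S.eps ≤ ∑ f : Fin j₁ → Fin n, ∑ g : Fin j₂ → Fin n,
      ((∏ a, S.xx (f a)) * (∏ a, S.zz (g a)))
        * S.gap (θ / ((∏ a, S.xx (f a)) * (∏ a, S.zz (g a)))) := by
  classical
  set h : (Fin j₁ → Fin n) × (Fin j₂ → Fin n) → ℝ := fun p =>
    ((∏ a, S.xx (p.1 a)) * (∏ a, S.zz (p.2 a)))
      * S.gap (θ / ((∏ a, S.xx (p.1 a)) * (∏ a, S.zz (p.2 a)))) with hhdef
  have hsum : ∑ f : Fin j₁ → Fin n, ∑ g : Fin j₂ → Fin n,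
      ((∏ a, S.xx (f a)) * (∏ a, S.zz (g a)))
        * S.gap (θ / ((∏ a, S.xx (f a)) * (∏ a, S.zz (g a))))
      = ∑ p : (Fin j₁ → Fin n) × (Fin j₂ → Fin n), h p := by
    rw [Fintype.sum_prod_type]
  rw [hsum, ← Finset.add_sum_erase _ _ (Finset.mem_univ (f', g'))]
  have hterm : G ≤ h (f', g') := hgain
  have hrest : -S.eps ≤ ∑ p ∈ Finset.univ.erase (f', g'), h p := by
    have h1 : ∀ p ∈ Finset.univ.erase (f', g'),
        ((∏ a, S.xx (p.1 a)) * (∏ a, S.zz (p.2 a))) * (-S.eps) ≤ h p := fun p _ =>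
      mul_le_mul_of_nonneg_left (S.gap_ge_neg_eps _) (S.PP_pos _ _ p.1 p.2).le
    have h2 : ∑ p ∈ Finset.univ.erase (f', g'),
        ((∏ a, S.xx (p.1 a)) * (∏ a, S.zz (p.2 a))) * (-S.eps)
        ≤ ∑ p ∈ Finset.univ.erase (f', g'), h p := Finset.sum_le_sum h1
    have h3 : ∑ p ∈ Finset.univ.erase (f', g'),
        ((∏ a, S.xx (p.1 a)) * (∏ a, S.zz (p.2 a))) * (-S.eps)
        = (∑ p ∈ Finset.univ.erase (f', g'),
            (∏ a, S.xx (p.1 a)) * (∏ a, S.zz (p.2 a))) * (-S.eps) := by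
      rw [Finset.sum_mul]
    have h4 : ∑ p ∈ Finset.univ.erase (f', g'),
        (∏ a, S.xx (p.1 a)) * (∏ a, S.zz (p.2 a)) ≤ 1 := by
      have hsub : ∑ p ∈ Finset.univ.erase (f', g'),
          (∏ a, S.xx (p.1 a)) * (∏ a, S.zz (p.2 a))
          ≤ ∑ p : (Fin j₁ → Fin n) × (Fin j₂ → Fin n),
            (∏ a, S.xx (p.1 a)) * (∏ a, S.zz (p.2 a)) :=
        Finset.sum_le_sum_of_subset_of_nonneg (Finset.erase_subset _ _)
          (fun p _ _ => (S.PP_pos _ _ p.1 p.2).le)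
      have hfull : ∑ p : (Fin j₁ → Fin n) × (Fin j₂ → Fin n),
          (∏ a, S.xx (p.1 a)) * (∏ a, S.zz (p.2 a)) ≤ 1 := by
        rw [Fintype.sum_prod_type]
        exact S.block_mass j₁ j₂
      linarith
    have h5 : 0 ≤ ∑ p ∈ Finset.univ.erase (f', g'),
        (∏ a, S.xx (p.1 a)) * (∏ a, S.zz (p.2 a)) :=
      Finset.sum_nonneg fun p _ => (S.PP_pos _ _ p.1 p.2).le
    have := S.eps_pos
    nlinarith
  linarith

end Setup
end Stmt6Aux

namespace Stmt6Aux
namespace Setup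
open Finset

variable {n : ℕ} (S : Setup n)
include S

lemma xx_i1_eq : S.xx S.i1 = S.b := by
  simp only [xx]
  rw [if_neg]
  intro h
  have : (1:ℕ) = 0 := congrArg Fin.val h
  omega

lemma lamtrho_le_b0 : S.lam * S.t * S.rho0 ≤ S.b0 := by
  have h := S.rho0_le_b0r
  have := S.lamt_pos
  rw [le_div_iff₀ this] at h
  nlinarith

lemma lamtrho_le_xx (i : Fin n) : S.lam * S.t * S.rho0 ≤ S.xx i :=
  le_trans S.lamtrho_le_b0 (le_trans S.b0_le_b (S.b_le_xx i))

lemma lamtrho_le_zz {i : Fin n} (h : S.y i ≠ S.t) : S.lam * S.t * S.rho0 ≤ S.zz i := by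
  have h1 := le_trans S.rho0_le_myr (S.myr_le i h)
  show S.lam * S.t * S.rho0 ≤ S.lam * S.y i
  rw [le_div_iff₀ S.t_pos] at h1
  nlinarith [S.hl0, S.t_pos]

lemma qm_bm (m : ℕ) : S.q ^ m * S.b ^ m = (S.lam * S.t) ^ m := by
  rw [q, div_pow, div_mul_cancel₀ _ (ne_of_gt (pow_pos S.b_pos m))]

set_option maxHeartbeats 1000000 in
/-- Partner existence: a dip atom yields a gain atom somewhere in the telescope. -/
lemma partner_exists (θ : ℝ) {j₀ : ℕ} (hj₀ : j₀ < S.KK)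
    (f₀ : Fin j₀ → Fin n) (g₀ : Fin (S.KK - 1 - j₀) → Fin n)
    (hneg : S.gap (θ / ((∏ a, S.xx (f₀ a)) * (∏ a, S.zz (g₀ a)))) < 0) :
    ∃ (j' : ℕ) (_ : j' < S.KK) (f' : Fin j' → Fin n) (g' : Fin (S.KK - 1 - j') → Fin n),
      S.gam * (S.lam * S.t) ^ (S.KK - 1)
        ≤ ((∏ a, S.xx (f' a)) * (∏ a, S.zz (g' a)))
          * S.gap (θ / ((∏ a, S.xx (f' a)) * (∏ a, S.zz (g' a)))) := by
  classical
  have hKK := S.KK_pos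
  have hKKeq : S.KK = S.MD + S.EE + 1 := rfl
  set P₀ := (∏ a, S.xx (f₀ a)) * (∏ a, S.zz (g₀ a)) with hP₀
  have hP₀pos : 0 < P₀ := S.PP_pos _ _ f₀ g₀
  set u₀ := θ / P₀ with hu₀
  obtain ⟨hd1, hd2⟩ := S.dip_range hneg
  have hθ : θ = u₀ * P₀ := by rw [hu₀, div_mul_cancel₀ _ (ne_of_gt hP₀pos)]
  set Tset := Finset.univ.filter (fun a : Fin (S.KK - 1 - j₀) => S.y (g₀ a) = S.t)
    with hTset
  have hj₂ : (Finset.univ : Finset (Fin (S.KK - 1 - j₀))).card = S.KK - 1 - j₀ := by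
    rw [Finset.card_univ, Fintype.card_fin]
  by_cases hcnt : S.MD ≤ Tset.card
  · -- DOWN case: swap `m` factors of value `λt` to `b`
    obtain ⟨m, hm1, hm2, hgain⟩ := S.land hd1 hd2
    have hmcnt : m ≤ Tset.card := le_trans hm2 hcnt
    obtain ⟨T, hTsub, hTcard⟩ := Finset.exists_subset_card_eq hmcnt
    have hTsub' : T ⊆ Tset := hTsub
    have hmj₂ : m ≤ S.KK - 1 - j₀ := by
      calc m ≤ Tset.card := hmcnt
        _ ≤ (Finset.univ : Finset (Fin (S.KK - 1 - j₀))).card :=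
            Finset.card_le_card (Finset.subset_univ _)
        _ = S.KK - 1 - j₀ := hj₂
    have hj'lt : j₀ + m < S.KK := by omega
    have hTc : Tᶜ.card = S.KK - 1 - (j₀ + m) := by
      rw [Finset.card_compl, hTcard, Fintype.card_fin]
      omega
    set f' : Fin (j₀ + m) → Fin n := Fin.append f₀ (fun _ : Fin m => S.i1) with hf'
    set g' : Fin (S.KK - 1 - (j₀ + m)) → Fin n :=
      fun a => g₀ ((Tᶜ.orderIsoOfFin hTc a) : Fin (S.KK - 1 - j₀)) with hg'
    refine ⟨j₀ + m, hj'lt, f', g', ?_⟩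
    have hf'prod : ∏ a, S.xx (f' a) = (∏ a, S.xx (f₀ a)) * S.b ^ m := by
      rw [hf', Fin.prod_univ_add]
      congr 1
      · exact Finset.prod_congr rfl fun a _ => by rw [Fin.append_left]
      · rw [Finset.prod_congr rfl fun a (_ : a ∈ Finset.univ) => by
          rw [Fin.append_right]]
        rw [Finset.prod_congr rfl (fun a _ => S.xx_i1_eq), Finset.prod_const,
          Finset.card_univ, Fintype.card_fin]
    have hg'prod : ∏ a, S.zz (g' a) = ∏ a ∈ Tᶜ, S.zz (g₀ a) := by
      rw [← Finset.prod_coe_sort Tᶜ (fun a => S.zz (g₀ a))]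
      exact Equiv.prod_comp (Tᶜ.orderIsoOfFin hTc).toEquiv
        (fun x : ↥(Tᶜ) => S.zz (g₀ ↑x))
    have hTprod : ∏ a ∈ T, S.zz (g₀ a) = (S.lam * S.t) ^ m := by
      rw [Finset.prod_congr rfl (fun a ha => show S.zz (g₀ a) = S.lam * S.t by
        have h := (Finset.mem_filter.mp (hTsub' ha)).2
        show S.lam * S.y (g₀ a) = S.lam * S.t
        rw [h]), Finset.prod_const, hTcard]
    have hsplit : ∏ a, S.zz (g₀ a) = (S.lam * S.t) ^ m * ∏ a ∈ Tᶜ, S.zz (g₀ a) := by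
      rw [← Finset.prod_mul_prod_compl T (fun a => S.zz (g₀ a)), hTprod]
    set P' := (∏ a, S.xx (f' a)) * (∏ a, S.zz (g' a)) with hP'
    have hP'pos : 0 < P' := S.PP_pos _ _ f' g'
    have hkey : P' * (S.lam * S.t) ^ m = P₀ * S.b ^ m := by
      rw [hP', hP₀, hf'prod, hg'prod, hsplit]
      ring
    have hbm : (0:ℝ) < S.b ^ m := pow_pos S.b_pos m
    have hP0eq : P₀ = S.q ^ m * P' := by
      apply mul_right_cancel₀ (ne_of_gt hbm)
      calc P₀ * S.b ^ m = P' * (S.lam * S.t) ^ m := hkey.symm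
        _ = P' * (S.q ^ m * S.b ^ m) := by rw [S.qm_bm]
        _ = S.q ^ m * P' * S.b ^ m := by ring
    have hval : θ / P' = u₀ * S.q ^ m := by
      rw [hθ, hP0eq]
      field_simp
    have hP'ge : (S.lam * S.t) ^ (S.KK - 1) ≤ P' := by
      have h1 : P₀ ≤ P' := by
        rw [hP0eq]
        have hqm : S.q ^ m ≤ 1 := pow_le_one₀ S.q_pos.le S.q_lt_one.le
        nlinarith
      have h2 : (S.lam * S.t) ^ (j₀ + (S.KK - 1 - j₀)) ≤ P₀ := S.PP_ge _ _ f₀ g₀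
      have h3 : j₀ + (S.KK - 1 - j₀) = S.KK - 1 := by omega
      rw [h3] at h2
      linarith
    calc S.gam * (S.lam * S.t) ^ (S.KK - 1)
        = (S.lam * S.t) ^ (S.KK - 1) * S.gam := by ring
      _ ≤ P' * S.gap (u₀ * S.q ^ m) :=
          mul_le_mul hP'ge hgain S.gam_pos.le hP'pos.le
      _ = P' * S.gap (θ / P') := by rw [hval]
  · -- UP case: jump to the bottom pure atom
    push_neg at hcnt
    refine ⟨0, by omega, Fin.elim0, fun _ => S.iL, ?_⟩
    have hzero : (∏ a : Fin 0, S.xx (Fin.elim0 a)) = 1 := Finset.prod_of_isEmpty _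
    have hP'eq : (∏ a : Fin 0, S.xx (Fin.elim0 a))
        * (∏ _a : Fin (S.KK - 1 - 0), S.zz S.iL) = (S.lam * S.t) ^ (S.KK - 1) := by
      rw [hzero, one_mul, Finset.prod_const, Finset.card_univ, Fintype.card_fin]
      rw [S.zz_iL, Nat.sub_zero]
    rw [hP'eq]
    -- lower bound on `P₀`
    have hx : (S.lam * S.t * S.rho0) ^ j₀ ≤ ∏ a, S.xx (f₀ a) := by
      rw [show (S.lam * S.t * S.rho0) ^ j₀ = ∏ _a : Fin j₀, S.lam * S.t * S.rho0 by
        rw [Finset.prod_const, Finset.card_univ, Fintype.card_fin]]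
      refine Finset.prod_le_prod (fun a _ => ?_) (fun a _ => S.lamtrho_le_xx _)
      have := S.lamt_pos; have := S.one_lt_rho0; nlinarith
    have hzT : ∏ a ∈ Tset, S.zz (g₀ a) ≥ (S.lam * S.t) ^ Tset.card := by
      rw [ge_iff_le, show (S.lam * S.t) ^ Tset.card = ∏ _a ∈ Tset, S.lam * S.t by
        rw [Finset.prod_const]]
      exact Finset.prod_le_prod (fun a _ => S.lamt_pos.le) (fun a _ => S.lamt_le_zz _)
    have hzTc : ∏ a ∈ Tsetᶜ, S.zz (g₀ a) ≥ (S.lam * S.t * S.rho0) ^ Tsetᶜ.card := by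
      rw [ge_iff_le, show (S.lam * S.t * S.rho0) ^ Tsetᶜ.card
          = ∏ _a ∈ Tsetᶜ, S.lam * S.t * S.rho0 by rw [Finset.prod_const]]
      refine Finset.prod_le_prod (fun a _ => ?_) (fun a ha => ?_)
      · have := S.lamt_pos; have := S.one_lt_rho0; nlinarith
      · apply S.lamtrho_le_zz
        have := Finset.mem_compl.mp ha
        rw [hTset, Finset.mem_filter] at this
        intro hcontra
        exact this ⟨Finset.mem_univ _, hcontra⟩
    have hz : (S.lam * S.t) ^ Tset.card * (S.lam * S.t * S.rho0) ^ Tsetᶜ.card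
        ≤ ∏ a, S.zz (g₀ a) := by
      rw [← Finset.prod_mul_prod_compl Tset (fun a => S.zz (g₀ a))]
      have h1 : (0:ℝ) ≤ (S.lam * S.t) ^ Tset.card := (pow_pos S.lamt_pos _).le
      have h2 : (0:ℝ) < (S.lam * S.t * S.rho0) ^ Tsetᶜ.card := by
        have := S.lamt_pos; have := S.one_lt_rho0
        apply pow_pos; nlinarith
      nlinarith [hzT, hzTc, Finset.prod_nonneg
        (fun a (_ : a ∈ Tset) => (S.zz_pos (g₀ a)).le)]
    have hTcc : Tsetᶜ.card = S.KK - 1 - j₀ - Tset.card := by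
      rw [Finset.card_compl, Fintype.card_fin]
    have hP₀ge : (S.lam * S.t) ^ (S.KK - 1) * S.rho0 ^ S.EE ≤ P₀ := by
      have hcard : Tset.card ≤ S.KK - 1 - j₀ :=
        le_trans (Finset.card_le_card (Finset.subset_univ _)) (le_of_eq hj₂)
      have hEle : S.EE ≤ j₀ + Tsetᶜ.card := by omega
      have hcomb : (S.lam * S.t * S.rho0) ^ j₀
          * ((S.lam * S.t) ^ Tset.card * (S.lam * S.t * S.rho0) ^ Tsetᶜ.card)
          = (S.lam * S.t) ^ (j₀ + Tset.card + Tsetᶜ.card)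
            * S.rho0 ^ (j₀ + Tsetᶜ.card) := by
        rw [mul_pow, mul_pow, pow_add, pow_add, pow_add]
        ring
      have hexp : j₀ + Tset.card + Tsetᶜ.card = S.KK - 1 := by omega
      have hrho : S.rho0 ^ S.EE ≤ S.rho0 ^ (j₀ + Tsetᶜ.card) :=
        pow_le_pow_right₀ S.one_lt_rho0.le hEle
      calc (S.lam * S.t) ^ (S.KK - 1) * S.rho0 ^ S.EE
          ≤ (S.lam * S.t) ^ (S.KK - 1) * S.rho0 ^ (j₀ + Tsetᶜ.card) := by
            have := (pow_pos S.lamt_pos (S.KK - 1))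
            nlinarith
        _ = (S.lam * S.t) ^ (j₀ + Tset.card + Tsetᶜ.card)
            * S.rho0 ^ (j₀ + Tsetᶜ.card) := by rw [hexp]
        _ = (S.lam * S.t * S.rho0) ^ j₀
            * ((S.lam * S.t) ^ Tset.card * (S.lam * S.t * S.rho0) ^ Tsetᶜ.card) := by
            rw [hcomb]
        _ ≤ (∏ a, S.xx (f₀ a)) * ∏ a, S.zz (g₀ a) := by
            have h2 : (0:ℝ) < (S.lam * S.t) ^ Tset.card
                * (S.lam * S.t * S.rho0) ^ Tsetᶜ.card := by
              have := S.lamt_pos; have := S.one_lt_rho0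
              apply mul_pos (pow_pos S.lamt_pos _)
              apply pow_pos; nlinarith
            have h3 : (0:ℝ) < (S.lam * S.t * S.rho0) ^ j₀ := by
              have := S.lamt_pos; have := S.one_lt_rho0
              apply pow_pos; nlinarith
            have h4 := S.prodx_pos _ f₀
            nlinarith [hx, hz]
        _ = P₀ := hP₀.symm
    -- the plateau is reached
    have hplat : S.x0 ≤ θ / (S.lam * S.t) ^ (S.KK - 1) := by
      have hltK : (0:ℝ) < (S.lam * S.t) ^ (S.KK - 1) := pow_pos S.lamt_pos _
      have hu₀b : S.b0 ≤ u₀ := by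
        have := S.b0_le_b; have := S.sig_pos; linarith
      have h1 : 1 < u₀ * (S.rho0 ^ S.EE) := by
        have hE := S.EE_spec
        have hb0 := S.b0_pos
        rw [div_lt_iff₀ hb0] at hE
        have hrpos : (0:ℝ) < S.rho0 ^ S.EE := by
          have := S.one_lt_rho0; positivity
        calc (1:ℝ) < S.rho0 ^ S.EE * S.b0 := hE
          _ = S.b0 * S.rho0 ^ S.EE := by ring
          _ ≤ u₀ * S.rho0 ^ S.EE := by nlinarith
      have h2 : u₀ * S.rho0 ^ S.EE ≤ θ / (S.lam * S.t) ^ (S.KK - 1) := by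
        rw [hθ, mul_div_assoc]
        have h3 : S.rho0 ^ S.EE ≤ P₀ / (S.lam * S.t) ^ (S.KK - 1) := by
          rw [le_div_iff₀ hltK]
          calc S.rho0 ^ S.EE * (S.lam * S.t) ^ (S.KK - 1)
              = (S.lam * S.t) ^ (S.KK - 1) * S.rho0 ^ S.EE := by ring
            _ ≤ P₀ := hP₀ge
        have hu₀pos : 0 < u₀ := by
          have := S.b_pos; have := S.sig_pos; linarith
        nlinarith
      have := S.x0_lt_one
      linarith
    rw [S.gap_plateau hplat]
    have h5 : (0:ℝ) < (S.lam * S.t) ^ (S.KK - 1) := pow_pos S.lamt_pos _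
    have := S.gam_le_lam
    nlinarith

end Setup
end Stmt6Aux

namespace Stmt6Aux
namespace Setup
open Finset

variable {n : ℕ} (S : Setup n)
include S

set_option maxHeartbeats 1000000 in
/-- The key `W`-comparison for tensor powers. -/
lemma Msum_nonneg (θ : ℝ) : W (tpow S.zz S.KK) θ ≤ W (tpow S.xx S.KK) θ := by
  classical
  have htel : W (tpow S.xx S.KK) θ - W (tpow S.zz S.KK) θ
      = ∑ j ∈ Finset.range S.KK,
          (HH S.xx S.zz (j+1) (S.KK - (j+1)) θ - HH S.xx S.zz j (S.KK - j) θ) := by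
    rw [Finset.sum_range_sub (f := fun j => HH S.xx S.zz j (S.KK - j) θ)]
    rw [Nat.sub_self, Nat.sub_zero]
    rw [HH_right_zero, HH_left_zero]
  have hper : ∀ j ∈ Finset.range S.KK,
      HH S.xx S.zz (j+1) (S.KK - (j+1)) θ - HH S.xx S.zz j (S.KK - j) θ
      = ∑ f : Fin j → Fin n, ∑ g : Fin (S.KK - 1 - j) → Fin n,
          ((∏ a, S.xx (f a)) * (∏ a, S.zz (g a)))
            * S.gap (θ / ((∏ a, S.xx (f a)) * (∏ a, S.zz (g a)))) := by
    intro j hj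
    rw [Finset.mem_range] at hj
    have h1 : S.KK - (j+1) = S.KK - 1 - j := by omega
    have h2 : S.KK - j = (S.KK - 1 - j) + 1 := by omega
    rw [h1, h2, HH_succ_left S.xx S.zz S.xx_pos S.zz_pos,
      HH_succ_right S.xx S.zz S.xx_pos S.zz_pos, ← Finset.sum_sub_distrib]
    refine Finset.sum_congr rfl fun f _ => ?_
    rw [← Finset.sum_sub_distrib]
    refine Finset.sum_congr rfl fun g _ => ?_
    rw [gap]
    ring
  rw [← sub_nonneg, htel, Finset.sum_congr rfl hper]
  by_cases hall : ∀ j ∈ Finset.range S.KK, ∀ f : Fin j → Fin n,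
      ∀ g : Fin (S.KK - 1 - j) → Fin n,
      0 ≤ S.gap (θ / ((∏ a, S.xx (f a)) * (∏ a, S.zz (g a))))
  · apply Finset.sum_nonneg
    intro j hj
    apply Finset.sum_nonneg
    intro f _
    apply Finset.sum_nonneg
    intro g _
    exact mul_nonneg (S.PP_pos _ _ f g).le (hall j hj f g)
  · push_neg at hall
    obtain ⟨j₀, hj₀mem, f₀, g₀, hneg⟩ := hall
    rw [Finset.mem_range] at hj₀mem
    obtain ⟨j', hj', f', g', hgain⟩ := S.partner_exists θ hj₀mem f₀ g₀ hneg
    rw [← Finset.add_sum_erase _ _ (Finset.mem_range.mpr hj')]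
    have hblock := S.block_ge_with j' (S.KK - 1 - j') θ f' g' hgain
    have hrest : ∑ j ∈ (Finset.range S.KK).erase j', (-S.eps)
        ≤ ∑ j ∈ (Finset.range S.KK).erase j',
            ∑ f : Fin j → Fin n, ∑ g : Fin (S.KK - 1 - j) → Fin n,
              ((∏ a, S.xx (f a)) * (∏ a, S.zz (g a)))
                * S.gap (θ / ((∏ a, S.xx (f a)) * (∏ a, S.zz (g a)))) :=
      Finset.sum_le_sum fun j _ => S.block_ge _ _ θ
    have hcard : ((Finset.range S.KK).erase j').card = S.KK - 1 := by
      rw [Finset.card_erase_of_mem (Finset.mem_range.mpr hj'), Finset.card_range]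
    have hconst : ∑ _j ∈ (Finset.range S.KK).erase j', (-S.eps)
        = ((S.KK : ℝ) - 1) * (-S.eps) := by
      rw [Finset.sum_const, hcard, nsmul_eq_mul]
      congr 1
      have := S.KK_pos
      push_cast [Nat.cast_sub (by omega : 1 ≤ S.KK)]
      ring
    have hKKr : (0:ℝ) < (S.KK : ℝ) := by exact_mod_cast S.KK_pos
    have hepsKK : S.eps * (S.KK : ℝ) ≤ S.gam * (S.lam * S.t) ^ (S.KK - 1) := by
      have := S.eps_le_M
      rw [le_div_iff₀ hKKr] at this
      exact this
    have := S.eps_pos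
    rw [hconst] at hrest
    linarith

lemma xx_mem_M : S.xx ∈ Mlaminf S.lam S.y := by
  refine ⟨S.xx_mem_Vn, S.KK, S.KK_pos, ?_⟩
  apply supMaj_of_W
  intro θ
  rw [tpow_smul]
  exact S.Msum_nonneg θ

end Setup

/-- Counterexample when `y₂ ≠ y_n`. -/
lemma counterexample {n : ℕ} (hn : 2 ≤ n) {y : Fin n → ℝ} {lam : ℝ}
    (hl0 : 0 < lam) (hl1 : lam < 1) (hy : y ∈ Vn n) (hypos : ∀ i, 0 < y i)
    (hne : y ⟨1, by have := hl0; omega⟩ ≠ y ⟨n - 1, by have := hl0; omega⟩) :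
    ∃ x, x ∈ Tlaminf lam y ∧ x ∈ Mlaminf lam y ∧ x ∉ Slam lam y := by
  have hn3 : 3 ≤ n := by
    by_contra h
    have hn2 : n = 2 := by omega
    have hval : (1:ℕ) = n - 1 := by omega
    exact hne (congrArg y (Fin.ext hval))
  let S : Setup n := ⟨y, lam, hn3, hypos, hy.2.1, hy.2.2, hl0, hl1, hne⟩
  exact ⟨S.xx, S.xx_mem_T, S.xx_mem_M, S.xx_not_Slam⟩

end Stmt6Aux

/-- Theorem 7 of the paper. For `λ ∈ (0,1)`, the equivalence
of `T^λ(y) = S^λ(y)`, `M^λ(y) = S^λ(y)`, and `y_2 = y_n`. -/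
theorem stmt6 {n : ℕ} (hn : 2 ≤ n) (lam : ℝ) (hlam : 0 < lam ∧ lam < 1)
    (y : Fin n → ℝ) (hy : y ∈ Vn n) (hypos : ∀ i, 0 < y i) :
    (Tlaminf lam y = Slam lam y ↔ Mlaminf lam y = Slam lam y) ∧
    (Tlaminf lam y = Slam lam y ↔ y ⟨1, by omega⟩ = y ⟨n - 1, by omega⟩) := by
  obtain ⟨hl0, hl1⟩ := hlam
  constructor
  · constructor
    · intro hA
      by_cases hC : y ⟨1, by omega⟩ = y ⟨n - 1, by omega⟩
      · exact Stmt6Aux.flat_M_eq_S hn hl0 hl1 hy hypos hC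
      · exfalso
        obtain ⟨x, hxT, -, hxS⟩ :=
          Stmt6Aux.counterexample hn hl0 hl1 hy hypos hC
        rw [hA] at hxT
        exact hxS hxT
    · intro hB
      by_cases hC : y ⟨1, by omega⟩ = y ⟨n - 1, by omega⟩
      · exact Stmt6Aux.flat_T_eq_S hn hl0 hl1 hy hypos hC
      · exfalso
        obtain ⟨x, -, hxM, hxS⟩ :=
          Stmt6Aux.counterexample hn hl0 hl1 hy hypos hC
        rw [hB] at hxM
        exact hxS hxM
  · constructor
    · intro hA
      by_contra hC
      obtain ⟨x, hxT, -, hxS⟩ :=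
        Stmt6Aux.counterexample hn hl0 hl1 hy hypos hC
      rw [hA] at hxT
      exact hxS hxT
    · intro hC
      exact Stmt6Aux.flat_T_eq_S hn hl0 hl1 hy hypos hC

end
end

section
/- Let y ∈ V^n be a probability vector with positive components and let k > 1 be an integer. If M_{k+1}(y) = S(y), then M_k(y) = S(y). Consequently, if M_k(y) = S(y) for some k ≥ 1, then M_l(y) = S(y) for every l ≤ k. -/
noncomputable section

/-!
Suppose `x^{⊗m} ≺ y^{⊗m}` but `e_r(x) > e_r(y)` for some `r < n`, and let `R` be the first `r`
indices. Group the multi-indices of an `m`-fold tensor power by how many of their factors lie in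
`R`. The mass of `x^{⊗m}` on the level set "at least `j` factors in `R`" is the binomial tail
`P(Bin(m, e_r x) ≥ j)`, so these tails bound the corresponding `e`-values of `y^{⊗m}` from below.
Tensoring once more with `y` turns them into lower bounds for `y^{⊗(m+1)}` that are strictly larger
than the binomial tails of `e_r(y)`, because the tails strictly increase with the parameter; by
continuity they still dominate the tails of some `A > e_r(y)`. The vector `v` that is constant on
`R` and on its complement, with `e_r(v) = A`, has tensor powers whose superlevel sets are exactly
these level sets, carrying the tails of `A`. Hence `v ∈ M_{m+1}(y) = S(y)`, contradicting
`e_r(v) > e_r(y)`.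

Majorization is compared through the excess `t ↦ ∑ (u_i - t)⁺`, which is pointwise monotone in
`u` for the majorization order and behaves well under tensor products; this also gives
`S(y) ⊆ M_m(y)`.
-/

open Finset Topology

section Excess

variable {ι : Type*} [Fintype ι]

def excess (u : ι → ℝ) (t : ℝ) : ℝ := ∑ i, max (u i - t) 0

def IsTopSet (u : ι → ℝ) (t : ℝ) (T : Finset ι) : Prop :=
  (∀ i ∈ T, t ≤ u i) ∧ ∀ i ∉ T, u i ≤ t

theorem sum_sub_le_excess (u : ι → ℝ) (t : ℝ) (s : Finset ι) :
    ∑ i ∈ s, u i - #s * t ≤ excess u t := by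
  calc ∑ i ∈ s, u i - #s * t = ∑ i ∈ s, (u i - t) := by simp [sum_sub_distrib]
    _ ≤ ∑ i ∈ s, max (u i - t) 0 := sum_le_sum fun i _ => le_max_left _ _
    _ ≤ excess u t := sum_le_univ_sum_of_nonneg fun i => le_max_right _ _

theorem IsTopSet.excess_eq {u : ι → ℝ} {t : ℝ} {T : Finset ι} (hT : IsTopSet u t T) :
    excess u t = ∑ i ∈ T, u i - #T * t := by
  classical
  have h (i : ι) : max (u i - t) 0 = if i ∈ T then u i - t else 0 := by
    split_ifs with hi
    exacts [max_eq_left (sub_nonneg.2 (hT.1 i hi)), max_eq_right (sub_nonpos.2 (hT.2 i hi))]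
  simp [excess, h, sum_ite_mem, sum_sub_distrib]

theorem IsTopSet.card_mul_sum_compl_le [DecidableEq ι] {u : ι → ℝ} {t : ℝ} {T : Finset ι}
    (hT : IsTopSet u t T) : #T * ∑ i ∈ Tᶜ, u i ≤ #Tᶜ * ∑ i ∈ T, u i := by
  have h₁ : ∑ i ∈ Tᶜ, u i ≤ #Tᶜ * t := by
    simpa using sum_le_sum fun i hi => hT.2 i (mem_compl.1 hi)
  have h₂ : #T * t ≤ ∑ i ∈ T, u i := by simpa using sum_le_sum hT.1
  calc #T * ∑ i ∈ Tᶜ, u i ≤ #T * (#Tᶜ * t) := by gcongr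
    _ = #Tᶜ * (#T * t) := by ring
    _ ≤ #Tᶜ * ∑ i ∈ T, u i := by gcongr

theorem excess_const_mul_le {U W : ι → ℝ} (h : ∀ t, excess U t ≤ excess W t) {c : ℝ}
    (hc : 0 ≤ c) (t : ℝ) : excess (fun i => c * U i) t ≤ excess (fun i => c * W i) t := by
  rcases hc.eq_or_lt with rfl | hc
  · simp [excess]
  have key (V : ι → ℝ) : excess (fun i => c * V i) t = c * excess V (t / c) := by
    simp only [excess, mul_sum, mul_max_of_nonneg _ _ hc.le, mul_sub, mul_div_cancel₀ _ hc.ne',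
      mul_zero]
  rw [key, key]
  exact mul_le_mul_of_nonneg_left (h _) hc.le

end Excess

section TopSums

variable {M : ℕ}

theorem le_eSum (u : Fin M → ℝ) (s : Finset (Fin M)) : ∑ i ∈ s, u i ≤ eSum u #s := by
  refine le_csSup ?_ ⟨s, rfl, rfl⟩
  refine ((Set.finite_range fun s : Finset (Fin M) => ∑ i ∈ s, u i).subset ?_).bddAbove
  rintro _ ⟨s, -, rfl⟩
  exact ⟨s, rfl⟩

theorem eSum_le (u : Fin M → ℝ) {l : ℕ} (hl : l ≤ M) {B : ℝ}
    (h : ∀ s : Finset (Fin M), #s = l → ∑ i ∈ s, u i ≤ B) : eSum u l ≤ B := by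
  obtain ⟨s, -, hs⟩ := exists_subset_card_eq (by simpa using hl : l ≤ #(univ : Finset (Fin M)))
  exact csSup_le ⟨_, s, hs, rfl⟩ (by rintro _ ⟨s, hs, rfl⟩; exact h s hs)

theorem eSum_zero (u : Fin M → ℝ) : eSum u 0 = 0 :=
  le_antisymm (eSum_le u (Nat.zero_le M) fun s hs => by simp [card_eq_zero.1 hs])
    (by simpa using le_eSum u ∅)

theorem eSum_univ (u : Fin M → ℝ) : eSum u M = ∑ i, u i :=
  le_antisymm (eSum_le u le_rfl fun s hs => by rw [(card_eq_iff_eq_univ s).1 (by simpa using hs)])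
    (by simpa using le_eSum u univ)

theorem IsTopSet.eSum_eq {u : Fin M → ℝ} {t : ℝ} {T : Finset (Fin M)} (hT : IsTopSet u t T) :
    eSum u #T = ∑ i ∈ T, u i := by
  refine le_antisymm (eSum_le u (card_finset_fin_le T) fun s hs => ?_) (le_eSum u T)
  have := sum_sub_le_excess u t s
  rw [hT.excess_eq, hs] at this
  linarith

theorem IsTopSet.map_perm {u : Fin M → ℝ} {t : ℝ} {T : Finset (Fin M)} (σ : Equiv.Perm (Fin M))
    (hT : IsTopSet (u ∘ σ) t T) : IsTopSet u t (T.map σ.toEmbedding) := by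
  refine ⟨fun i hi => ?_, fun i hi => ?_⟩ <;> rw [mem_map_equiv] at hi
  · simpa using hT.1 _ hi
  · simpa using hT.2 _ hi

theorem Antitone.isTopSet_Iio {u : Fin M → ℝ} (hu : Antitone u) (b : Fin M) :
    IsTopSet u (u b) (Iio b) :=
  ⟨fun _ hi => hu (mem_Iio.1 hi).le, fun _ hi => hu (not_lt.1 (mem_Iio.not.1 hi))⟩

theorem Antitone.eSum_eq_sum_Iio {u : Fin M → ℝ} (hu : Antitone u) (b : Fin M) :
    eSum u b = ∑ i ∈ Iio b, u i := by
  simpa using (hu.isTopSet_Iio b).eSum_eq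

theorem exists_isTopSet (u : Fin M → ℝ) {l : ℕ} (hl : l ≤ M) : ∃ t T, IsTopSet u t T ∧ #T = l := by
  rcases hl.lt_or_eq with hl | rfl
  · have hσ : Antitone (u ∘ Tuple.sort (-u)) := fun i j hij => by
      simpa using Tuple.monotone_sort (-u) hij
    exact ⟨_, _, (hσ.isTopSet_Iio ⟨l, hl⟩).map_perm _, by simp⟩
  · obtain ⟨t, ht⟩ := (Set.finite_range u).bddBelow
    exact ⟨t, univ, ⟨fun i _ => ht ⟨i, rfl⟩, by simp⟩, by simp⟩

theorem exists_card_eq_eSum (u : Fin M → ℝ) {l : ℕ} (hl : l ≤ M) :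
    ∃ T : Finset (Fin M), #T = l ∧ eSum u l = ∑ i ∈ T, u i := by
  obtain ⟨t, T, hT, rfl⟩ := exists_isTopSet u hl
  exact ⟨T, rfl, hT.eSum_eq⟩

theorem eSum_sub_le_excess (u : Fin M → ℝ) {l : ℕ} (hl : l ≤ M) (t : ℝ) :
    eSum u l - l * t ≤ excess u t := by
  obtain ⟨T, rfl, hT⟩ := exists_card_eq_eSum u hl
  simpa [hT] using sum_sub_le_excess u t T

theorem Maj.eSum_le {u w : Fin M → ℝ} (h : Maj u w) {l : ℕ} (hl : l ≤ M) :
    eSum u l ≤ eSum w l := by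
  rcases Nat.eq_zero_or_pos l with rfl | hl0
  · simp [eSum_zero]
  · exact h.2 l hl0 hl

theorem Maj.excess_le {u w : Fin M → ℝ} (h : Maj u w) (t : ℝ) : excess u t ≤ excess w t := by
  classical
  set T := univ.filter fun i => t ≤ u i
  have hT : IsTopSet u t T := ⟨fun i hi => (mem_filter.1 hi).2, fun i hi => by
    simp only [T, mem_filter, mem_univ, true_and, not_le] at hi; exact hi.le⟩
  have hTM : #T ≤ M := card_finset_fin_le T
  calc excess u t = eSum u #T - #T * t := by rw [hT.excess_eq, hT.eSum_eq]
    _ ≤ eSum w #T - #T * t := by gcongr; exact h.eSum_le hTM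
    _ ≤ excess w t := eSum_sub_le_excess w hTM t

theorem eSum_le_eSum_of_excess_le {u w : Fin M → ℝ} (h : ∀ t, excess u t ≤ excess w t) {l : ℕ}
    (hl : l ≤ M) : eSum u l ≤ eSum w l := by
  obtain ⟨t, T, hT, rfl⟩ := exists_isTopSet w hl
  linarith [eSum_sub_le_excess u hl t, h t, hT.excess_eq, hT.eSum_eq]

theorem maj_of_forall_isTopSet {u w : Fin M → ℝ} (hsum : ∑ i, u i = ∑ i, w i)
    (h : ∀ t, ∃ T, IsTopSet u t T ∧ ∑ i ∈ T, u i ≤ eSum w #T) : Maj u w := by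
  refine ⟨hsum, fun l _ hl => eSum_le_eSum_of_excess_le (fun t => ?_) hl⟩
  obtain ⟨T, hT, hTw⟩ := h t
  linarith [eSum_sub_le_excess w (card_finset_fin_le T) t, hT.excess_eq]

end TopSums

section TensorPower

variable {n m : ℕ}

def finPowSuccEquiv (n m : ℕ) : Fin (n ^ (m + 1)) ≃ Fin n × Fin (n ^ m) :=
  finFunctionFinEquiv.symm.trans
    ((Fin.consEquiv fun _ => Fin n).symm.trans ((Equiv.refl _).prodCongr finFunctionFinEquiv))

theorem finFunctionFinEquiv_symm_finPowSuccEquiv_symm (p : Fin n) (q : Fin (n ^ m)) :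
    finFunctionFinEquiv.symm ((finPowSuccEquiv n m).symm (p, q)) =
      Fin.cons p (finFunctionFinEquiv.symm q) := by
  simp [finPowSuccEquiv, Fin.consEquiv]

theorem tpow_finPowSuccEquiv_symm (u : Fin n → ℝ) (p : Fin n) (q : Fin (n ^ m)) :
    tpow u (m + 1) ((finPowSuccEquiv n m).symm (p, q)) = u p * tpow u m q := by
  simp [tpow, finFunctionFinEquiv_symm_finPowSuccEquiv_symm, Fin.prod_univ_succ]

theorem sum_comp_tpow_succ (u : Fin n → ℝ) (F : ℝ → ℝ) :
    ∑ i, F (tpow u (m + 1) i) = ∑ p, ∑ q, F (u p * tpow u m q) := by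
  rw [← (finPowSuccEquiv n m).symm.sum_comp, Fintype.sum_prod_type]
  simp [tpow_finPowSuccEquiv_symm]

theorem sum_tpow (u : Fin n → ℝ) (m : ℕ) : ∑ i, tpow u m i = (∑ i, u i) ^ m := by
  induction m with
  | zero =>
    simp only [tpow, univ_eq_empty, prod_empty, sum_const, card_univ, Fintype.card_fin, pow_zero,
      one_smul]
  | succ m ih =>
    rw [← (finPowSuccEquiv n m).symm.sum_comp, Fintype.sum_prod_type]
    simp only [tpow_finPowSuccEquiv_symm, ← mul_sum, ← sum_mul, ih, pow_succ, mul_comm]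

theorem tpow_nonneg {u : Fin n → ℝ} (hu : ∀ i, 0 ≤ u i) (m : ℕ) (i : Fin (n ^ m)) :
    0 ≤ tpow u m i :=
  prod_nonneg fun _ _ => hu _

theorem excess_tpow_succ (u : Fin n → ℝ) (t : ℝ) :
    excess (tpow u (m + 1)) t = ∑ p, excess (fun q => u p * tpow u m q) t :=
  sum_comp_tpow_succ u fun z => max (z - t) 0

theorem excess_tpow_le {u w : Fin n → ℝ} (hu : ∀ i, 0 ≤ u i) (hw : ∀ i, 0 ≤ w i)
    (h : ∀ t, excess u t ≤ excess w t) (m : ℕ) (t : ℝ) :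
    excess (tpow u m) t ≤ excess (tpow w m) t := by
  induction m generalizing t with
  | zero => rw [show tpow u 0 = tpow w 0 by ext; simp [tpow]]
  | succ m ih =>
    calc excess (tpow u (m + 1)) t
        ≤ ∑ p, excess (fun q => u p * tpow w m q) t := by
          rw [excess_tpow_succ]
          exact sum_le_sum fun p _ => excess_const_mul_le ih (hu p) t
      _ = ∑ q, excess (fun p => tpow w m q * u p) t := by
          simp only [excess]
          rw [sum_comm]
          simp only [mul_comm]
      _ ≤ ∑ q, excess (fun p => tpow w m q * w p) t :=
          sum_le_sum fun q _ => excess_const_mul_le h (tpow_nonneg hw m q) t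
      _ = excess (tpow w (m + 1)) t := by
          rw [excess_tpow_succ]
          simp only [excess]
          rw [sum_comm]
          simp only [mul_comm]

theorem maj_tpow {u w : Fin n → ℝ} (h : Maj u w) (hu : ∀ i, 0 ≤ u i) (hw : ∀ i, 0 ≤ w i)
    (m : ℕ) : Maj (tpow u m) (tpow w m) :=
  ⟨by rw [sum_tpow, sum_tpow, h.1], fun _ _ hl =>
    eSum_le_eSum_of_excess_le (excess_tpow_le hu hw h.excess_le m) hl⟩

end TensorPower

section BinomTail

/-- `binomTail a b m j = ∑_{i ≥ j} (m choose i) a^i b^(m-i)`, given by Pascal's rule; the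
truncation of `j - 1` at `0` agrees with the rule. -/
def binomTail (a b : ℝ) : ℕ → ℕ → ℝ
  | 0, j => if j = 0 then 1 else 0
  | m + 1, j => a * binomTail a b m (j - 1) + b * binomTail a b m j

variable {a a' b : ℝ}

theorem binomTail_zero_eq_add_pow (a b : ℝ) (m : ℕ) : binomTail a b m 0 = (a + b) ^ m := by
  induction m with
  | zero => simp [binomTail]
  | succ m ih => rw [binomTail, Nat.zero_sub, ih, pow_succ]; ring

theorem binomTail_eq_zero_of_lt (a b : ℝ) {m j : ℕ} (h : m < j) : binomTail a b m j = 0 := by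
  induction m generalizing j with
  | zero => simp [binomTail, h.ne']
  | succ m ih => rw [binomTail, ih (by omega), ih (by omega)]; ring

theorem binomTail_nonneg (ha : 0 ≤ a) (hb : 0 ≤ b) (m j : ℕ) : 0 ≤ binomTail a b m j := by
  induction m generalizing j with
  | zero => simp only [binomTail]; split_ifs <;> norm_num
  | succ m ih => exact add_nonneg (mul_nonneg ha (ih _)) (mul_nonneg hb (ih _))

theorem binomTail_antitone (ha : 0 ≤ a) (hb : 0 ≤ b) (m : ℕ) : Antitone (binomTail a b m) := by
  induction m with
  | zero => intro j j' h; simp only [binomTail]; split_ifs <;> first | omega | norm_num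
  | succ m ih =>
    intro j j' h
    exact add_le_add (mul_le_mul_of_nonneg_left (ih (Nat.sub_le_sub_right h 1)) ha)
      (mul_le_mul_of_nonneg_left (ih h) hb)

theorem binomTail_le_binomTail (ha : 0 ≤ a) (haa' : a ≤ a') (ha' : a' ≤ 1) (m j : ℕ) :
    binomTail a (1 - a) m j ≤ binomTail a' (1 - a') m j := by
  induction m generalizing j with
  | zero => rfl
  | succ m ih =>
    have hanti := binomTail_antitone (ha.trans haa') (sub_nonneg.2 ha') m (Nat.sub_le j 1)
    calc binomTail a (1 - a) (m + 1) j
        ≤ a * binomTail a' (1 - a') m (j - 1) + (1 - a) * binomTail a' (1 - a') m j :=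
          add_le_add (mul_le_mul_of_nonneg_left (ih _) ha)
            (mul_le_mul_of_nonneg_left (ih _) (by linarith))
      _ ≤ binomTail a' (1 - a') (m + 1) j := by
          rw [binomTail]
          nlinarith [mul_nonneg (sub_nonneg.2 haa') (sub_nonneg.2 hanti)]

theorem binomTail_lt_binomTail (ha : 0 < a) (haa' : a < a') (ha' : a' ≤ 1) {m j : ℕ}
    (hj : 1 ≤ j) (hjm : j ≤ m) : binomTail a (1 - a) m j < binomTail a' (1 - a') m j := by
  induction m generalizing j with
  | zero => omega
  | succ m ih =>
    have hle := binomTail_le_binomTail ha.le haa'.le ha' m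
    have hanti := binomTail_antitone (ha.trans haa').le (sub_nonneg.2 ha') m (Nat.sub_le j 1)
    simp only [binomTail]
    rcases hjm.lt_or_eq with hjm | rfl
    · have := ih hj (by omega)
      nlinarith [hle (j - 1), mul_nonneg (sub_nonneg.2 haa'.le) (sub_nonneg.2 hanti)]
    · rw [Nat.add_sub_cancel, binomTail_eq_zero_of_lt _ _ (Nat.lt_succ_self m),
        binomTail_eq_zero_of_lt _ _ (Nat.lt_succ_self m)]
      rcases Nat.eq_zero_or_pos m with rfl | hm
      · simpa [binomTail] using haa'
      · have := ih hm le_rfl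
        nlinarith [binomTail_nonneg (ha.trans haa').le (sub_nonneg.2 ha') m m]

theorem continuous_binomTail (m j : ℕ) : Continuous fun a => binomTail a (1 - a) m j := by
  induction m generalizing j with
  | zero => exact continuous_const
  | succ m ih =>
    simp only [binomTail]
    exact (continuous_id.mul (ih _)).add ((continuous_const.sub continuous_id).mul (ih _))

theorem exists_binomTail_succ_le {m : ℕ} (hm : 1 ≤ m) (ha : 0 < a) (haa' : a < a')
    (ha' : a' ≤ 1) : ∃ A, a < A ∧ A ≤ 1 ∧ ∀ J, binomTail A (1 - A) (m + 1) J ≤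
      a * binomTail a' (1 - a') m (J - 1) + (1 - a) * binomTail a' (1 - a') m J := by
  set B : ℕ → ℝ := fun J =>
    a * binomTail a' (1 - a') m (J - 1) + (1 - a) * binomTail a' (1 - a') m J
  have hstrict : ∀ J ∈ Icc 1 (m + 1), binomTail a (1 - a) (m + 1) J < B J := by
    intro J hJ
    obtain ⟨hJ1, hJm⟩ := mem_Icc.1 hJ
    have hle := binomTail_le_binomTail ha.le haa'.le ha' m
    simp only [binomTail, B]
    rcases hJm.lt_or_eq with hJm | rfl
    · have := binomTail_lt_binomTail ha haa' ha' hJ1 (by omega : J ≤ m)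
      nlinarith [hle (J - 1)]
    · rw [Nat.add_sub_cancel, binomTail_eq_zero_of_lt _ _ (Nat.lt_succ_self m),
        binomTail_eq_zero_of_lt _ _ (Nat.lt_succ_self m)]
      linarith [mul_lt_mul_of_pos_left (binomTail_lt_binomTail ha haa' ha' hm le_rfl) ha]
  have hev : ∀ᶠ A in 𝓝 a, ∀ J ∈ Icc 1 (m + 1), binomTail A (1 - A) (m + 1) J < B J :=
    (Filter.eventually_all_finset _).2 fun J hJ =>
      (continuous_binomTail _ _).continuousAt.eventually_lt continuousAt_const (hstrict J hJ)
  obtain ⟨A, ⟨hA, hA1⟩, haA⟩ :=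
    (((hev.and (Iio_mem_nhds (haa'.trans_le ha'))).filter_mono nhdsWithin_le_nhds).and
      (self_mem_nhdsWithin (s := Set.Ioi a))).exists
  refine ⟨A, haA, hA1.le, fun J => ?_⟩
  rcases Nat.eq_zero_or_pos J with rfl | hJ0
  · norm_num [binomTail, binomTail_zero_eq_add_pow]
  rcases le_or_gt J (m + 1) with hJm | hJm
  · exact (hA J (mem_Icc.2 ⟨hJ0, hJm⟩)).le
  · rw [binomTail_eq_zero_of_lt _ _ hJm, binomTail_eq_zero_of_lt _ _ (by omega : m < J - 1),
      binomTail_eq_zero_of_lt _ _ (by omega : m < J)]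
    simp

end BinomTail

section LevelSets

variable {n m : ℕ} (R : Finset (Fin n))

def levelCount (i : Fin (n ^ m)) : ℕ := #{j | finFunctionFinEquiv.symm i j ∈ R}

def levelSet (m J : ℕ) : Finset (Fin (n ^ m)) := {i | J ≤ levelCount R i}

def consSet (A B : Finset (Fin (n ^ m))) : Finset (Fin (n ^ (m + 1))) :=
  ((R ×ˢ A) ∪ (Rᶜ ×ˢ B)).map (finPowSuccEquiv n m).symm.toEmbedding

theorem card_consSet (A B : Finset (Fin (n ^ m))) :
    #(consSet R A B) = #R * #A + #Rᶜ * #B := by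
  rw [consSet, card_map, card_union_of_disjoint, card_product, card_product]
  exact disjoint_product.2 (Or.inl disjoint_compl_right)

theorem sum_tpow_consSet (u : Fin n → ℝ) (A B : Finset (Fin (n ^ m))) :
    ∑ i ∈ consSet R A B, tpow u (m + 1) i =
      (∑ p ∈ R, u p) * ∑ q ∈ A, tpow u m q + (∑ p ∈ Rᶜ, u p) * ∑ q ∈ B, tpow u m q := by
  rw [consSet, sum_map, sum_union (disjoint_product.2 (Or.inl disjoint_compl_right)),
    sum_product, sum_product]
  simp [tpow_finPowSuccEquiv_symm, sum_mul_sum]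

theorem levelCount_finPowSuccEquiv_symm (p : Fin n) (q : Fin (n ^ m)) :
    levelCount R ((finPowSuccEquiv n m).symm (p, q)) =
      (if p ∈ R then 1 else 0) + levelCount R q := by
  simp [levelCount, finFunctionFinEquiv_symm_finPowSuccEquiv_symm, Fin.card_filter_univ_succ']

theorem levelSet_succ (J : ℕ) :
    levelSet R (m + 1) J = consSet R (levelSet R m (J - 1)) (levelSet R m J) := by
  ext i
  obtain ⟨⟨p, q⟩, rfl⟩ := (finPowSuccEquiv n m).symm.surjective i
  simp only [levelSet, consSet, mem_filter, mem_univ, true_and, mem_map_equiv, Equiv.symm_symm,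
    Equiv.apply_symm_apply, mem_union, mem_product, mem_compl, levelCount_finPowSuccEquiv_symm]
  by_cases hp : p ∈ R <;> simp only [hp, if_true, if_false, not_true, not_false_eq_true,
    true_and, false_and, or_false, false_or] <;> omega

theorem sum_tpow_levelSet (u : Fin n → ℝ) (m J : ℕ) :
    ∑ i ∈ levelSet R m J, tpow u m i = binomTail (∑ p ∈ R, u p) (∑ p ∈ Rᶜ, u p) m J := by
  induction m generalizing J with
  | zero =>
    simp only [levelSet, levelCount, tpow, binomTail, univ_eq_empty, filter_empty, card_empty,
      prod_empty, sum_const, nsmul_eq_mul, mul_one, nonpos_iff_eq_zero]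
    split_ifs with hJ
    · rw [filter_true_of_mem fun _ _ => hJ, card_univ, Fintype.card_fin, pow_zero, Nat.cast_one]
    · rw [filter_false_of_mem fun _ _ => hJ, card_empty, Nat.cast_zero]
  | succ m ih => rw [levelSet_succ, sum_tpow_consSet, ih, ih, binomTail]

theorem add_mul_eSum_tpow_le (u : Fin n → ℝ) {a b : ℕ} (ha : a ≤ n ^ m) (hb : b ≤ n ^ m) :
    (∑ p ∈ R, u p) * eSum (tpow u m) a + (∑ p ∈ Rᶜ, u p) * eSum (tpow u m) b ≤
      eSum (tpow u (m + 1)) (#R * a + #Rᶜ * b) := by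
  obtain ⟨A, rfl, hA⟩ := exists_card_eq_eSum (tpow u m) ha
  obtain ⟨B, rfl, hB⟩ := exists_card_eq_eSum (tpow u m) hb
  rw [hA, hB, ← sum_tpow_consSet, ← card_consSet]
  exact le_eSum _ _

theorem Maj.binomTail_le_eSum_tpow_levelSet {x y : Fin n → ℝ} (hxy : Maj (tpow x m) (tpow y m))
    (hy : ∀ i, 0 ≤ y i) (J : ℕ) :
    (∑ p ∈ R, y p) * binomTail (∑ p ∈ R, x p) (∑ p ∈ Rᶜ, x p) m (J - 1) +
        (∑ p ∈ Rᶜ, y p) * binomTail (∑ p ∈ R, x p) (∑ p ∈ Rᶜ, x p) m J ≤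
      eSum (tpow y (m + 1)) #(levelSet R (m + 1) J) := by
  have key (j : ℕ) :
      binomTail (∑ p ∈ R, x p) (∑ p ∈ Rᶜ, x p) m j ≤ eSum (tpow y m) #(levelSet R m j) := by
    rw [← sum_tpow_levelSet]
    exact (le_eSum _ _).trans (hxy.eSum_le (card_finset_fin_le _))
  calc _ ≤ (∑ p ∈ R, y p) * eSum (tpow y m) #(levelSet R m (J - 1)) +
          (∑ p ∈ Rᶜ, y p) * eSum (tpow y m) #(levelSet R m J) :=
        add_le_add (mul_le_mul_of_nonneg_left (key _) (sum_nonneg fun i _ => hy i))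
          (mul_le_mul_of_nonneg_left (key _) (sum_nonneg fun i _ => hy i))
    _ ≤ _ := add_mul_eSum_tpow_le R y (card_finset_fin_le _) (card_finset_fin_le _)
    _ = _ := by rw [levelSet_succ, card_consSet]

end LevelSets

section FlatVector

variable {n : ℕ} (R : Finset (Fin n))

def flatVec (α β : ℝ) : Fin n → ℝ := fun i => if i ∈ R then α else β

theorem sum_flatVec_self (α β : ℝ) : ∑ i ∈ R, flatVec R α β i = #R * α := by
  simp only [flatVec]
  rw [sum_ite_of_true fun _ hi => hi, sum_const, nsmul_eq_mul]

theorem sum_flatVec_compl (α β : ℝ) : ∑ i ∈ Rᶜ, flatVec R α β i = #Rᶜ * β := by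
  simp only [flatVec]
  rw [sum_ite_of_false fun _ hi => mem_compl.1 hi, sum_const, nsmul_eq_mul]

theorem isTopSet_flatVec {α β : ℝ} (hβα : β ≤ α) : IsTopSet (flatVec R α β) α R :=
  ⟨fun i hi => by simp [flatVec, hi], fun i hi => by simp [flatVec, hi, hβα]⟩

theorem flatVec_Iio_mem_Vn {α β : ℝ} (b : Fin n) (hβ : 0 ≤ β) (hβα : β ≤ α)
    (hsum : #(Iio b) * α + #(Iio b)ᶜ * β = 1) : flatVec (Iio b) α β ∈ Vn n := by
  refine ⟨fun i => ?_, ?_, fun i j hij => ?_⟩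
  · unfold flatVec; split_ifs <;> linarith
  · rw [← sum_add_sum_compl (Iio b), sum_flatVec_self, sum_flatVec_compl, hsum]
  · by_cases hj : j < b
    · simp [flatVec, hj, hij.trans_lt hj]
    · simp only [flatVec, mem_Iio, hj, if_false]
      split_ifs <;> linarith

theorem tpow_flatVec (α β : ℝ) {m : ℕ} (i : Fin (n ^ m)) :
    tpow (flatVec R α β) m i = α ^ levelCount R i * β ^ (m - levelCount R i) := by
  have h := card_filter_add_card_filter_not (s := univ) (fun j => finFunctionFinEquiv.symm i j ∈ R)
  rw [card_univ, Fintype.card_fin] at h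
  simp only [tpow, flatVec, prod_ite, prod_const, levelCount]
  congr 2
  omega

theorem pow_mul_pow_sub_le_pow_mul_pow_sub {α β : ℝ} (hβ : 0 ≤ β) (hβα : β ≤ α) {j k m : ℕ}
    (hjk : j ≤ k) (hkm : k ≤ m) : α ^ j * β ^ (m - j) ≤ α ^ k * β ^ (m - k) := by
  obtain ⟨d, rfl⟩ := Nat.exists_eq_add_of_le hjk
  have hβd := pow_le_pow_left₀ hβ hβα d
  have := pow_nonneg hβ (m - (j + d))
  have := pow_nonneg (hβ.trans hβα) j
  calc α ^ j * β ^ (m - j) = α ^ j * (β ^ d * β ^ (m - (j + d))) := by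
        rw [← pow_add]; congr 2; omega
    _ ≤ α ^ j * (α ^ d * β ^ (m - (j + d))) := by gcongr
    _ = α ^ (j + d) * β ^ (m - (j + d)) := by ring

theorem exists_isTopSet_tpow_flatVec {α β : ℝ} (hβ : 0 ≤ β) (hβα : β ≤ α) (m : ℕ) (t : ℝ) :
    ∃ J, IsTopSet (tpow (flatVec R α β) m) t (levelSet R m J) := by
  classical
  have hex : ∃ k, m < k ∨ t ≤ α ^ k * β ^ (m - k) := ⟨m + 1, Or.inl m.lt_succ_self⟩
  refine ⟨Nat.find hex, fun i hi => ?_, fun i hi => ?_⟩ <;>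
    simp only [levelSet, mem_filter, mem_univ, true_and, not_le] at hi <;> rw [tpow_flatVec]
  · rcases Nat.find_spec hex with h | h
    · exact absurd (hi.trans (card_finset_fin_le _)) h.not_ge
    · exact h.trans (pow_mul_pow_sub_le_pow_mul_pow_sub hβ hβα hi (card_finset_fin_le _))
  · exact (not_le.1 (not_or.1 (Nat.find_min hex hi)).2).le

theorem maj_tpow_flatVec {α β : ℝ} (hβ : 0 ≤ β) (hβα : β ≤ α) {m : ℕ} {w : Fin (n ^ m) → ℝ}
    (hsum : ∑ i, tpow (flatVec R α β) m i = ∑ i, w i)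
    (h : ∀ J, binomTail (#R * α) (#Rᶜ * β) m J ≤ eSum w #(levelSet R m J)) :
    Maj (tpow (flatVec R α β) m) w :=
  maj_of_forall_isTopSet hsum fun t => by
    obtain ⟨J, hJ⟩ := exists_isTopSet_tpow_flatVec R hβ hβα m t
    refine ⟨_, hJ, ?_⟩
    rw [sum_tpow_levelSet, sum_flatVec_self, sum_flatVec_compl]
    exact h J

end FlatVector

theorem exists_mem_Mk_succ_eSum_gt {n m r : ℕ} (hm : 1 ≤ m) {x y : Fin n → ℝ} (hx : x ∈ Mk m y)
    (hy : y ∈ Vn n) (hr : 1 ≤ r) (hrn : r < n) (hlt : eSum y r < eSum x r) :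
    ∃ v ∈ Mk (m + 1) y, eSum y r < eSum v r := by
  obtain ⟨⟨hx0, hx1, hxa⟩, hxy⟩ := hx
  obtain ⟨hy0, hy1, hya⟩ := hy
  set b : Fin n := ⟨r, hrn⟩
  set R := Iio b
  have hR : #R = r := Fin.card_Iio b
  have hRc : (#Rᶜ : ℝ) = n - r := by rw [card_compl, Fintype.card_fin, hR, Nat.cast_sub hrn.le]
  have hyRc : ∑ i ∈ Rᶜ, y i = 1 - ∑ i ∈ R, y i := by rw [← hy1, ← sum_compl_add_sum R]; ring
  have hxRc : ∑ i ∈ Rᶜ, x i = 1 - ∑ i ∈ R, x i := by rw [← hx1, ← sum_compl_add_sum R]; ring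
  have hbal := (hya.isTopSet_Iio b).card_mul_sum_compl_le
  rw [hR, hRc, hyRc] at hbal
  rw [hya.eSum_eq_sum_Iio b, hxa.eSum_eq_sum_Iio b] at hlt
  have hx1' : ∑ i ∈ R, x i ≤ 1 := hx1 ▸ sum_le_univ_sum_of_nonneg hx0
  have hr0 : (0 : ℝ) < r := by exact_mod_cast hr
  have hnr : (0 : ℝ) < n - r := sub_pos.2 (by exact_mod_cast hrn)
  have ha : 0 < ∑ i ∈ R, y i := by nlinarith
  obtain ⟨A, haA, hA1, hA⟩ := exists_binomTail_succ_le hm ha hlt hx1'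
  have hRα : (#R : ℝ) * (A / r) = A := by rw [hR]; field_simp
  have hRcβ : (#Rᶜ : ℝ) * ((1 - A) / (n - r)) = 1 - A := by rw [hRc]; field_simp
  have hβ : 0 ≤ (1 - A) / (n - r) := div_nonneg (by linarith) hnr.le
  have hβα : (1 - A) / (n - r) ≤ A / r := by rw [div_le_div_iff₀ hnr hr0]; nlinarith
  refine ⟨flatVec R (A / r) ((1 - A) / (n - r)), ⟨flatVec_Iio_mem_Vn b hβ hβα ?_, ?_⟩, ?_⟩
  · rw [hRα, hRcβ]; ring
  · refine maj_tpow_flatVec R hβ hβα ?_ fun J => ?_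
    · rw [sum_tpow, sum_tpow, ← sum_add_sum_compl R, sum_flatVec_self, sum_flatVec_compl, hRα,
        hRcβ, hy1]
      ring
    · have := hxy.binomTail_le_eSum_tpow_levelSet R hy0 J
      rw [hyRc, hxRc] at this
      rw [hRα, hRcβ]
      exact (hA J).trans this
  · have := (isTopSet_flatVec R hβα).eSum_eq
    rw [hR, sum_flatVec_self, hRα] at this
    rwa [hya.eSum_eq_sum_Iio b, this]

theorem Mk_eq_Sset_of_Mk_succ_eq {n m : ℕ} (hm : 1 ≤ m) {y : Fin n → ℝ} (hy : y ∈ Vn n)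
    (H : Mk (m + 1) y = Sset y) : Mk m y = Sset y := by
  refine Set.Subset.antisymm (fun x hx => ⟨hx.1, hx.1.2.1.trans hy.2.1.symm, fun l hl hln => ?_⟩)
    fun x hx => ⟨hx.1, maj_tpow hx.2 hx.1.1 hy.1 m⟩
  rcases hln.lt_or_eq with hln | rfl
  · by_contra hlt
    obtain ⟨v, hv, hvy⟩ := exists_mem_Mk_succ_eSum_gt hm hx hy hl hln (not_le.1 hlt)
    rw [H] at hv
    exact (hv.2.2 l hl hln.le).not_gt hvy
  · rw [eSum_univ, eSum_univ, hx.1.2.1, hy.2.1]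

theorem Mk_eq_Sset_of_le {n k l : ℕ} {y : Fin n → ℝ} (hy : y ∈ Vn n) (hl : 1 ≤ l) (hlk : l ≤ k)
    (H : Mk k y = Sset y) : Mk l y = Sset y := by
  induction k, hlk using Nat.le_induction with
  | base => exact H
  | succ k hlk ih => exact ih (Mk_eq_Sset_of_Mk_succ_eq (hl.trans hlk) hy H)

theorem stmt7_general {n k : ℕ} (hk : 1 < k)
    (y : Fin n → ℝ) (hy : y ∈ Vn n) :
    (Mk (k + 1) y = Sset y → Mk k y = Sset y) ∧
    (∀ k' : ℕ, 1 ≤ k' → Mk k' y = Sset y →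
      ∀ l : ℕ, 1 ≤ l → l ≤ k' → Mk l y = Sset y) :=
  ⟨Mk_eq_Sset_of_Mk_succ_eq hk.le hy, fun _ _ H _ hl hlk => Mk_eq_Sset_of_le hy hl hlk H⟩

/-- Theorem 8 of the paper. `M_{k+1}(y) = S(y)` implies
`M_k(y) = S(y)`, and consequently `M_k(y) = S(y)` implies `M_l(y) = S(y)`
for all `1 ≤ l ≤ k`. -/
theorem stmt7 {n k : ℕ} (hk : 1 < k)
    (y : Fin n → ℝ) (hy : y ∈ Vn n) (hypos : ∀ i, 0 < y i) :
    (Mk (k + 1) y = Sset y → Mk k y = Sset y) ∧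
    (∀ k' : ℕ, 1 ≤ k' → Mk k' y = Sset y →
      ∀ l : ℕ, 1 ≤ l → l ≤ k' → Mk l y = Sset y) :=
  stmt7_general hk y hy

end
end

section
/- Let x, y, x', y' be nonnegative vectors (x the same length as y, and x' the same length as y'). Then: (1) if x ◁^w y and x' ◁^w y', then x⊕x' ◁^w y⊕y'; (2) if x ◁^w y and x' ◁ y', then x⊕x' ◁^w y⊕y' if and only if max y' > min y; (3) if x ◁^w y, x' ≺^w y', and every component of x' is positive, then x⊗x' ◁^w y⊗y'. -/
noncomputable section

/-!
Everything rests on two splitting formulas for the sums of smallest components: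
`E_l(x ⊕ x') = E_a(x) + E_b(x')` for some `a + b = l`, and, when `x' ≥ 0`,
`E_l(x ⊗ x') = ∑ j, x'_j E_{b_j}(x)` for some `b` with `∑ j, b_j = l`.

For direct sums, the pieces can be compared one at a time. The only delicate case in (2) is `l = p`
with `a = 0`: there `x' ◁ y'` only gives `E_p(x') = E_p(y')`, and strictness has to come from
trading a largest entry of `y'` for a smallest entry of `y`, which is possible exactly when
`min y < max y'`.

For tensor products, Abel summation of `x' ≺ʷ y'` against the weights `E_{b_j}(y) ≥ 0`, sorted
decreasingly, gives a permutation `σ` with `∑ y'_j E_{b_{σ j}}(y) ≤ ∑ x'_j E_{b_j}(y)`.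
Since `x' > 0`, the relation `x ◁ʷ y` then makes one summand strictly larger.
-/

open Finset

section ESum

variable {n : ℕ}

lemma finite_setOf_sum_card_eq (x : Fin n → ℝ) (l : ℕ) :
    {r | ∃ s : Finset (Fin n), s.card = l ∧ r = ∑ i ∈ s, x i}.Finite :=
  (Set.finite_range fun s : Finset (Fin n) => ∑ i ∈ s, x i).subset
    (by rintro _ ⟨s, -, rfl⟩; exact ⟨s, rfl⟩)

lemma nonempty_setOf_sum_card_eq (x : Fin n → ℝ) {l : ℕ} (hl : l ≤ n) :
    {r | ∃ s : Finset (Fin n), s.card = l ∧ r = ∑ i ∈ s, x i}.Nonempty := by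
  obtain ⟨s, -, hs⟩ := exists_subset_card_eq (s := (univ : Finset (Fin n))) (by simpa using hl)
  exact ⟨_, s, hs, rfl⟩

lemma ESum_le_sum (x : Fin n → ℝ) {l : ℕ} {s : Finset (Fin n)} (hs : s.card = l) :
    ESum x l ≤ ∑ i ∈ s, x i :=
  csInf_le (finite_setOf_sum_card_eq x l).bddBelow ⟨s, hs, rfl⟩

lemma exists_ESum_eq (x : Fin n → ℝ) {l : ℕ} (hl : l ≤ n) :
    ∃ s : Finset (Fin n), s.card = l ∧ ESum x l = ∑ i ∈ s, x i :=
  (nonempty_setOf_sum_card_eq x hl).csInf_mem (finite_setOf_sum_card_eq x l)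

lemma sum_le_eSum (x : Fin n → ℝ) {l : ℕ} {s : Finset (Fin n)} (hs : s.card = l) :
    ∑ i ∈ s, x i ≤ eSum x l :=
  le_csSup (finite_setOf_sum_card_eq x l).bddAbove ⟨s, hs, rfl⟩

lemma exists_eSum_eq (x : Fin n → ℝ) {l : ℕ} (hl : l ≤ n) :
    ∃ s : Finset (Fin n), s.card = l ∧ eSum x l = ∑ i ∈ s, x i :=
  (nonempty_setOf_sum_card_eq x hl).csSup_mem (finite_setOf_sum_card_eq x l)

lemma ESum_zero (x : Fin n → ℝ) : ESum x 0 = 0 := by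
  obtain ⟨s, hs, h⟩ := exists_ESum_eq x n.zero_le
  rw [h, card_eq_zero.mp hs, sum_empty]

lemma ESum_eq_sum (x : Fin n → ℝ) : ESum x n = ∑ i, x i := by
  obtain ⟨s, hs, h⟩ := exists_ESum_eq x le_rfl
  rwa [(card_eq_iff_eq_univ s).mp (by simpa using hs)] at h

lemma ESum_nonneg {x : Fin n → ℝ} (hx : ∀ i, 0 ≤ x i) (l : ℕ) : 0 ≤ ESum x l :=
  Real.sInf_nonneg fun _ ⟨_, _, hr⟩ => hr ▸ sum_nonneg fun i _ => hx i

lemma ESum_add_eSum (x : Fin n → ℝ) {l : ℕ} (hl : l ≤ n) :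
    ESum x l + eSum x (n - l) = ∑ i, x i := by
  apply le_antisymm
  · obtain ⟨t, ht, h⟩ := exists_eSum_eq x (n.sub_le l)
    have htc : tᶜ.card = l := by rw [card_compl, ht, Fintype.card_fin]; omega
    rw [h, ← sum_compl_add_sum t]
    exact add_le_add_left (ESum_le_sum x htc) _
  · obtain ⟨s, hs, h⟩ := exists_ESum_eq x hl
    have hsc : sᶜ.card = n - l := by rw [card_compl, hs, Fintype.card_fin]
    rw [h, ← sum_add_sum_compl s]
    exact add_le_add_right (sum_le_eSum x hsc) _

lemma mul_minc_le_ESum (y : Fin n → ℝ) {a : ℕ} (ha : a ≤ n) : a * minc y ≤ ESum y a := by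
  obtain ⟨s, hs, h⟩ := exists_ESum_eq y ha
  rw [h, ← hs, ← nsmul_eq_mul]
  exact card_nsmul_le_sum s y _ fun i _ => csInf_le (Set.finite_range y).bddBelow ⟨i, rfl⟩

lemma sum_le_ESum_add_mul_maxc (y : Fin n → ℝ) {b : ℕ} (hb : b ≤ n) :
    ∑ i, y i ≤ ESum y b + (n - b) * maxc y := by
  obtain ⟨t, ht, h⟩ := exists_ESum_eq y hb
  have htc : (tᶜ.card : ℝ) = n - b := by
    rw [card_compl, ht, Fintype.card_fin, Nat.cast_sub hb]
  rw [h, ← htc, ← nsmul_eq_mul, ← sum_add_sum_compl t]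
  exact add_le_add_right
    (sum_le_card_nsmul _ y _ fun i _ => le_csSup (Set.finite_range y).bddAbove ⟨i, rfl⟩) _

lemma ESum_one_le_minc (hn : 0 < n) (y : Fin n → ℝ) : ESum y 1 ≤ minc y := by
  obtain ⟨i, hi⟩ := (Set.range_nonempty_iff_nonempty.2 ⟨⟨0, hn⟩⟩ : (Set.range y).Nonempty).csInf_mem
    (Set.finite_range y)
  rw [minc, ← hi, ← sum_singleton y i]
  exact ESum_le_sum y (card_singleton i)

lemma ESum_sub_one_le_sum_sub_maxc (hn : 0 < n) (y : Fin n → ℝ) :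
    ESum y (n - 1) ≤ ∑ i, y i - maxc y := by
  obtain ⟨j, hj⟩ := (Set.range_nonempty_iff_nonempty.2 ⟨⟨0, hn⟩⟩ : (Set.range y).Nonempty).csSup_mem
    (Set.finite_range y)
  rw [maxc, ← hj, ← sum_erase_add _ _ (mem_univ j), add_sub_cancel_right]
  exact ESum_le_sum y (by simp [card_erase_of_mem])

end ESum

section Majorization

variable {n : ℕ} {x y : Fin n → ℝ}

lemma SupMaj.ESum_le (h : SupMaj x y) {l : ℕ} (hl : l ≤ n) : ESum y l ≤ ESum x l := by
  rcases Nat.eq_zero_or_pos l with rfl | hl1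
  · rw [ESum_zero, ESum_zero]
  · exact h l hl1 hl

lemma SSupMaj.supMaj (h : SSupMaj x y) : SupMaj x y :=
  fun l hl1 hl => (h l hl1 hl).le

lemma SMaj.ESum_lt (h : SMaj x y) {l : ℕ} (hl1 : 1 ≤ l) (hl : l < n) : ESum y l < ESum x l := by
  have hx := ESum_add_eSum x hl.le
  have hy := ESum_add_eSum y hl.le
  have := h.2 (n - l) (by omega) (by omega)
  linarith [h.1]

lemma SMaj.supMaj (h : SMaj x y) : SupMaj x y := by
  intro l hl1 hl
  rcases hl.lt_or_eq with hl | rfl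
  · exact (h.ESum_lt hl1 hl).le
  · rw [ESum_eq_sum, ESum_eq_sum, h.1]

end Majorization

section Append

variable {m p : ℕ}

lemma sum_map_disjSum_append (x : Fin m → ℝ) (x' : Fin p → ℝ) (s : Finset (Fin m))
    (t : Finset (Fin p)) :
    ∑ k ∈ (s.disjSum t).map finSumFinEquiv.toEmbedding, Fin.append x x' k =
      ∑ i ∈ s, x i + ∑ j ∈ t, x' j := by
  simp [sum_disjSum]

lemma ESum_append_le (x : Fin m → ℝ) (x' : Fin p → ℝ) {a b : ℕ} (ha : a ≤ m) (hb : b ≤ p) :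
    ESum (Fin.append x x') (a + b) ≤ ESum x a + ESum x' b := by
  obtain ⟨s, hs, hxs⟩ := exists_ESum_eq x ha
  obtain ⟨t, ht, hx't⟩ := exists_ESum_eq x' hb
  rw [hxs, hx't, ← sum_map_disjSum_append]
  exact ESum_le_sum _ (by simp [hs, ht])

lemma ESum_append_le_right (x : Fin m → ℝ) (x' : Fin p → ℝ) {l : ℕ} (hl : l ≤ p) :
    ESum (Fin.append x x') l ≤ ESum x' l := by
  simpa [ESum_zero] using ESum_append_le x x' m.zero_le hl

lemma exists_ESum_append_eq (x : Fin m → ℝ) (x' : Fin p → ℝ) {l : ℕ} (hl : l ≤ m + p) :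
    ∃ a b, a ≤ m ∧ b ≤ p ∧ a + b = l ∧
      ESum (Fin.append x x') l = ESum x a + ESum x' b := by
  obtain ⟨u, hu, hxu⟩ := exists_ESum_eq (Fin.append x x') hl
  set v := u.map finSumFinEquiv.symm.toEmbedding
  set s := v.toLeft
  set t := v.toRight
  have hst : (s.disjSum t).map finSumFinEquiv.toEmbedding = u := by
    simp [s, t, v, toLeft_disjSum_toRight, map_map]
  have hcard : s.card + t.card = l := by rw [← hu, ← hst, card_map, card_disjSum]
  refine ⟨s.card, t.card, card_le_univ s |>.trans_eq (Fintype.card_fin m),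
    card_le_univ t |>.trans_eq (Fintype.card_fin p), hcard, le_antisymm ?_ ?_⟩
  · rw [← hcard]
    exact ESum_append_le x x' (card_le_univ s |>.trans_eq (Fintype.card_fin m))
      (card_le_univ t |>.trans_eq (Fintype.card_fin p))
  · rw [hxu, ← hst, sum_map_disjSum_append]
    exact add_le_add (ESum_le_sum x rfl) (ESum_le_sum x' rfl)

variable {x y : Fin m → ℝ} {x' y' : Fin p → ℝ}

lemma SSupMaj.append_of_ESum_append_lt (hxy : SSupMaj x y) (hx'y' : SupMaj x' y')
    (hy' : ∀ l, 1 ≤ l → l ≤ p → ESum (Fin.append y y') l < ESum x' l) :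
    SSupMaj (Fin.append x x') (Fin.append y y') := by
  intro l hl1 hl
  obtain ⟨a, b, ha, hb, rfl, hx⟩ := exists_ESum_append_eq x x' hl
  rw [hx]
  rcases Nat.eq_zero_or_pos a with rfl | ha1
  · rw [zero_add] at hl1 ⊢
    rw [ESum_zero, zero_add]
    exact hy' b hl1 hb
  · calc ESum (Fin.append y y') (a + b) ≤ ESum y a + ESum y' b := ESum_append_le y y' ha hb
      _ < ESum x a + ESum x' b := add_lt_add_of_lt_of_le (hxy a ha1 ha) (hx'y'.ESum_le hb)

lemma SSupMaj.append (hxy : SSupMaj x y) (hx'y' : SSupMaj x' y') :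
    SSupMaj (Fin.append x x') (Fin.append y y') :=
  hxy.append_of_ESum_append_lt hx'y'.supMaj fun l hl1 hl =>
    (ESum_append_le_right y y' hl).trans_lt (hx'y' l hl1 hl)

lemma sum_le_ESum_append_of_maxc_le_minc (h : maxc y' ≤ minc y) :
    ∑ j, y' j ≤ ESum (Fin.append y y') p := by
  obtain ⟨a, b, ha, hb, hab, hy⟩ := exists_ESum_append_eq y y' (Nat.le_add_left p m)
  have hpb : (p : ℝ) - b = a := by rw [← hab]; push_cast; ring
  have hsum := sum_le_ESum_add_mul_maxc y' hb
  rw [hpb] at hsum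
  rw [hy]
  linarith [mul_minc_le_ESum y ha, mul_le_mul_of_nonneg_left h a.cast_nonneg]

lemma SSupMaj.append_iff_of_sMaj (hm : 0 < m) (hp : 0 < p) (hxy : SSupMaj x y)
    (hx'y' : SMaj x' y') :
    SSupMaj (Fin.append x x') (Fin.append y y') ↔ minc y < maxc y' := by
  constructor
  · intro h
    by_contra! hyy'
    have := h p hp (Nat.le_add_left p m)
    linarith [sum_le_ESum_append_of_maxc_le_minc hyy', ESum_append_le_right x x' le_rfl,
      ESum_eq_sum x', hx'y'.1]
  · intro hyy'
    refine hxy.append_of_ESum_append_lt hx'y'.supMaj fun l hl1 hl => ?_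
    rcases hl.lt_or_eq with hl | rfl
    · exact (ESum_append_le_right y y' hl.le).trans_lt (hx'y'.ESum_lt hl1 hl)
    · have := ESum_append_le y y' hm (Nat.sub_le l 1)
      rw [Nat.add_sub_cancel' hl1] at this
      linarith [ESum_one_le_minc hm y, ESum_sub_one_le_sum_sub_maxc hp y', ESum_eq_sum x', hx'y'.1]

end Append

lemma sum_mul_nonneg_of_sum_Iic_nonneg :
    ∀ {n : ℕ} {w a : Fin n → ℝ}, Antitone a → (∀ i, 0 ≤ a i) →
      (∀ k, 0 ≤ ∑ i ∈ Iic k, w i) → 0 ≤ ∑ i, w i * a i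
  | 0, _, _, _, _, _ => by simp
  | n + 1, w, a, ha, ha0, hw => by
    -- Subtracting the last weight `a (last n)` leaves an antitone weight vanishing at `last n`.
    have hsplit : ∑ i, w i * a i =
        a (Fin.last n) * ∑ i ∈ Iic (Fin.last n), w i +
          ∑ i : Fin n, w i.castSucc * (a i.castSucc - a (Fin.last n)) := by
      have hcs : ∑ i : Fin n, w i.castSucc * a i.castSucc =
          ∑ i : Fin n, a (Fin.last n) * w i.castSucc +
            ∑ i : Fin n, w i.castSucc * (a i.castSucc - a (Fin.last n)) := by
        rw [← sum_add_distrib]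
        exact sum_congr rfl fun i _ => by ring
      rw [show Iic (Fin.last n) = univ from eq_univ_of_forall fun i => mem_Iic.2 (Fin.le_last i),
        Fin.sum_univ_castSucc, Fin.sum_univ_castSucc, mul_add, mul_sum, hcs]
      ring
    rw [hsplit]
    refine add_nonneg (mul_nonneg (ha0 _) (hw _)) (sum_mul_nonneg_of_sum_Iic_nonneg ?_ ?_ ?_)
    · exact fun i j hij => sub_le_sub_right (ha (Fin.castSucc_le_castSucc_iff.2 hij)) _
    · exact fun i => sub_nonneg.2 (ha (Fin.le_last _))
    · exact fun k => (Fin.sum_Iic_castSucc w k).symm ▸ hw k.castSucc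

lemma sum_Iic_le_sum_of_monotone {n : ℕ} {z : Fin n → ℝ} (hz : Monotone z) (k : Fin n)
    {s : Finset (Fin n)} (hs : s.card = k + 1) : ∑ i ∈ Iic k, z i ≤ ∑ i ∈ s, z i := by
  have hcard : (Iic k \ s).card = (s \ Iic k).card := card_sdiff_comm (by rw [Fin.card_Iic, hs])
  rw [← sum_inter_add_sum_sdiff (Iic k) s, ← sum_inter_add_sum_sdiff s (Iic k), inter_comm]
  refine add_le_add_right ?_ _
  calc ∑ i ∈ Iic k \ s, z i ≤ (Iic k \ s).card • z k :=
        sum_le_card_nsmul _ _ _ fun i hi => hz (mem_Iic.1 (mem_sdiff.1 hi).1)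
    _ = (s \ Iic k).card • z k := by rw [hcard]
    _ ≤ ∑ i ∈ s \ Iic k, z i :=
        card_nsmul_le_sum _ _ _ fun i hi => hz (not_le.1 (mt mem_Iic.2 (mem_sdiff.1 hi).2)).le

lemma sum_Iic_sort_le_ESum {n : ℕ} (y : Fin n → ℝ) (k : Fin n) :
    ∑ i ∈ Iic k, y (Tuple.sort y i) ≤ ESum y (k + 1) := by
  obtain ⟨s, hs, h⟩ := exists_ESum_eq y k.isLt
  have hs' : ∑ i ∈ s, y i = ∑ i ∈ s.map (Tuple.sort y).symm.toEmbedding, y (Tuple.sort y i) := by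
    simp [sum_map]
  rw [h, hs']
  exact sum_Iic_le_sum_of_monotone (Tuple.monotone_sort y) k (by rw [card_map, hs])

lemma SupMaj.exists_perm_sum_mul_le {n : ℕ} {x y : Fin n → ℝ} (h : SupMaj x y) {a : Fin n → ℝ}
    (ha : ∀ i, 0 ≤ a i) : ∃ σ : Equiv.Perm (Fin n), ∑ i, y i * a (σ i) ≤ ∑ i, x i * a i := by
  set σa := Tuple.sort (-a)
  set τ := Tuple.sort y
  have hanti : Antitone (a ∘ σa) := fun i j hij => neg_le_neg_iff.1 (Tuple.monotone_sort (-a) hij)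
  refine ⟨σa * τ⁻¹, ?_⟩
  rw [← Equiv.sum_comp τ, ← Equiv.sum_comp σa (fun i => x i * a i), ← sub_nonneg,
    ← sum_sub_distrib]
  simp only [Equiv.Perm.mul_apply, Equiv.Perm.inv_def, Equiv.symm_apply_apply, ← sub_mul]
  refine sum_mul_nonneg_of_sum_Iic_nonneg (w := fun i => x (σa i) - y (τ i)) hanti
    (fun i => ha _) fun k => ?_
  rw [sum_sub_distrib, sub_nonneg]
  calc ∑ i ∈ Iic k, y (τ i) ≤ ESum y (k + 1) := sum_Iic_sort_le_ESum y k
    _ ≤ ESum x (k + 1) := h.ESum_le k.isLt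
    _ ≤ ∑ i ∈ (Iic k).map σa.toEmbedding, x i := ESum_le_sum x (by simp)
    _ = ∑ i ∈ Iic k, x (σa i) := sum_map _ _ _

section Tensor

variable {m p : ℕ}

def tensorIndexEquiv (m p : ℕ) : (Σ _ : Fin p, Fin m) ≃ Fin (m * p) :=
  ((Equiv.sigmaEquivProd (Fin p) (Fin m)).trans (Equiv.prodComm _ _)).trans finProdFinEquiv

lemma tensor_finProdFinEquiv (x : Fin m → ℝ) (x' : Fin p → ℝ) (i : Fin m) (j : Fin p) :
    tensor x x' (finProdFinEquiv (i, j)) = x i * x' j := by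
  simp only [tensor, Equiv.symm_apply_apply]

lemma sum_map_sigma_tensor (x : Fin m → ℝ) (x' : Fin p → ℝ) (s : Fin p → Finset (Fin m)) :
    ∑ k ∈ (univ.sigma s).map (tensorIndexEquiv m p).toEmbedding, tensor x x' k =
      ∑ j, x' j * ∑ i ∈ s j, x i := by
  simp [tensorIndexEquiv, tensor_finProdFinEquiv, sum_sigma, mul_sum, mul_comm]

lemma ESum_tensor_le (x : Fin m → ℝ) (x' : Fin p → ℝ) (b : Fin p → ℕ) (hb : ∀ j, b j ≤ m) :
    ESum (tensor x x') (∑ j, b j) ≤ ∑ j, x' j * ESum x (b j) := by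
  choose s hs hxs using fun j => exists_ESum_eq x (hb j)
  simp_rw [hxs, ← sum_map_sigma_tensor]
  exact ESum_le_sum _ (by simp [hs])

lemma exists_ESum_tensor_eq (x : Fin m → ℝ) {x' : Fin p → ℝ} (hx' : ∀ j, 0 ≤ x' j) {l : ℕ}
    (hl : l ≤ m * p) :
    ∃ b : Fin p → ℕ, (∀ j, b j ≤ m) ∧ ∑ j, b j = l ∧
      ESum (tensor x x') l = ∑ j, x' j * ESum x (b j) := by
  obtain ⟨u, hu, hxu⟩ := exists_ESum_eq (tensor x x') hl
  set v : Finset (Σ _ : Fin p, Fin m) := u.map (tensorIndexEquiv m p).symm.toEmbedding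
  set s : Fin p → Finset (Fin m) := fun j =>
    v.preimage (Sigma.mk (β := fun _ => Fin m) j) sigma_mk_injective.injOn
  have hsu : (univ.sigma s).map (tensorIndexEquiv m p).toEmbedding = u := by
    rw [sigma_preimage_mk_of_subset v (subset_univ _)]
    simp [v, map_map]
  have hb : ∀ j, (s j).card ≤ m := fun j => card_le_univ (s j) |>.trans_eq (Fintype.card_fin m)
  have hcard : ∑ j, (s j).card = l := by rw [← hu, ← hsu, card_map, card_sigma]
  refine ⟨fun j => (s j).card, hb, hcard, le_antisymm ?_ ?_⟩
  · rw [← hcard]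
    exact ESum_tensor_le x x' _ hb
  · rw [hxu, ← hsu, sum_map_sigma_tensor]
    exact sum_le_sum fun j _ => mul_le_mul_of_nonneg_left (ESum_le_sum x rfl) (hx' j)

lemma SSupMaj.tensor_of_supMaj {x y : Fin m → ℝ} {x' y' : Fin p → ℝ} (hxy : SSupMaj x y)
    (hy : ∀ i, 0 ≤ y i) (hx'y' : SupMaj x' y') (hx' : ∀ j, 0 < x' j) :
    SSupMaj (tensor x x') (tensor y y') := by
  intro l hl1 hl
  obtain ⟨b, hb, rfl, hx⟩ := exists_ESum_tensor_eq x (fun j => (hx' j).le) hl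
  obtain ⟨σ, hσ⟩ := hx'y'.exists_perm_sum_mul_le fun j => ESum_nonneg hy (b j)
  obtain ⟨j₀, -, hj₀⟩ := exists_ne_zero_of_sum_ne_zero (Nat.one_le_iff_ne_zero.1 hl1)
  rw [hx]
  calc ESum (tensor y y') (∑ j, b j) = ESum (tensor y y') (∑ j, b (σ j)) := by
        rw [Equiv.sum_comp]
    _ ≤ ∑ j, y' j * ESum y (b (σ j)) := ESum_tensor_le y y' (b ∘ σ) fun j => hb (σ j)
    _ ≤ ∑ j, x' j * ESum y (b j) := hσ
    _ < ∑ j, x' j * ESum x (b j) :=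
        sum_lt_sum (fun j _ => mul_le_mul_of_nonneg_left (hxy.supMaj.ESum_le (hb j)) (hx' j).le)
          ⟨j₀, mem_univ _, mul_lt_mul_of_pos_left
            (hxy _ (Nat.one_le_iff_ne_zero.2 hj₀) (hb j₀)) (hx' j₀)⟩

end Tensor

theorem stmt12_general {m p : ℕ} (hm : 0 < m) (hp : 0 < p)
    (x y : Fin m → ℝ) (x' y' : Fin p → ℝ)
    (hy : ∀ i, 0 ≤ y i) :
    (SSupMaj x y → SSupMaj x' y' →
      SSupMaj (Fin.append x x') (Fin.append y y')) ∧
    (SSupMaj x y → SMaj x' y' →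
      (SSupMaj (Fin.append x x') (Fin.append y y') ↔ minc y < maxc y')) ∧
    (SSupMaj x y → SupMaj x' y' → (∀ i, 0 < x' i) →
      SSupMaj (tensor x x') (tensor y y')) :=
  ⟨SSupMaj.append, SSupMaj.append_iff_of_sMaj hm hp,
    fun hxy hx'y' hx' => hxy.tensor_of_supMaj hy hx'y' hx'⟩

/-- Lemma 7 of the paper. Properties of strict
super-majorization under direct sums and tensor products. -/
theorem stmt12 {m p : ℕ} (hm : 0 < m) (hp : 0 < p)
    (x y : Fin m → ℝ) (x' y' : Fin p → ℝ)
    (hx : ∀ i, 0 ≤ x i) (hy : ∀ i, 0 ≤ y i)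
    (hx' : ∀ i, 0 ≤ x' i) (hy' : ∀ i, 0 ≤ y' i) :
    (SSupMaj x y → SSupMaj x' y' →
      SSupMaj (Fin.append x x') (Fin.append y y')) ∧
    (SSupMaj x y → SMaj x' y' →
      (SSupMaj (Fin.append x x') (Fin.append y y') ↔ minc y < maxc y')) ∧
    (SSupMaj x y → SupMaj x' y' → (∀ i, 0 < x' i) →
      SSupMaj (tensor x x') (tensor y y')) :=
  stmt12_general hm hp x y x' y' hy
end
end
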